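/- arXiv:2310.05732 — 8 statements merged into one kernel-verified Lean document; each statement's English description precedes it below -/
import Mathlib

section
/- Let V > 0 and let U_V : ℝ_{≥0} → [0,1] be the universal schedule for volume V. Then for every y ∈ [0,1], ∫_0^∞ max(U_V(t) − y, 0) dt = ((e^{1−y} − 1)/(e − 1))·V, and for every y ∈ (0,1] this quantity is at most (1/(e−1))·((1−y)/y)·V. In particular, with c = e/(e−1), U_V satisfies the c-extendability condition A^∞_{U_V}(y) ≤ (c−1)·((1−y)/y)·V for all y ∈ ((c−1)/c, 1]. -/
open MeasureTheory Set Real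

noncomputable section

/-- The universal schedule for volume `V`: total resource usage `1` up to time
`V/(e-1)`, then `1 - ln((e-1)·t/V)` up to time `e·V/(e-1)`, then `0`. -/
def univSched (V : ℝ) (t : ℝ) : ℝ :=
  if t < V / (Real.exp 1 - 1) then 1
  else if t < Real.exp 1 * V / (Real.exp 1 - 1) then 1 - Real.log ((Real.exp 1 - 1) * t / V)
  else 0

/-!
Writing `s = (e - 1) t / V`, the integrand is `max (1 - y - log⁺ s) 0`, so the substitution
`t ↦ s` reduces everything to `∫_{s > 0} max (c - log⁺ s) 0 = e^c - 1` with `c = 1 - y`: the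
integrand is `c` on `(0, 1]`, `c - log s` on `[1, e^c]` and `0` beyond. The bound then comes
from `y ≤ e^(y - 1)`, i.e. `e^(1 - y) ≤ 1 / y`, and for `c = e/(e-1)` one has `c - 1 = 1/(e-1)`
and `(c - 1)/c = 1/e > 0`.
-/

lemma exp_one_sub_one_pos : 0 < exp 1 - 1 :=
  sub_pos.2 (one_lt_exp_iff.2 one_pos)

lemma max_sub_posLog_eq_zero {c s : ℝ} (hs : exp c ≤ s) : max (c - log⁺ s) 0 = 0 := by
  have hlog : c ≤ log s := (le_log_iff_exp_le ((exp_pos c).trans_le hs)).2 hs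
  exact max_eq_right (by linarith [show log s ≤ log⁺ s from le_max_right _ _])

theorem integral_Ioi_max_sub_posLog {c : ℝ} (hc : 0 ≤ c) :
    ∫ s in Ioi (0 : ℝ), max (c - log⁺ s) 0 = exp c - 1 := by
  set f : ℝ → ℝ := fun s ↦ max (c - log⁺ s) 0
  have hf : Continuous f := by fun_prop
  have h1 : (1 : ℝ) ≤ exp c := one_le_exp hc
  have hsupp : ∫ s in Ioi (0 : ℝ), f s = ∫ s in (0 : ℝ)..exp c, f s := by
    rw [intervalIntegral.integral_of_le (exp_pos c).le]
    refine setIntegral_eq_of_subset_of_forall_sdiff_eq_zero measurableSet_Ioi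
      Ioc_subset_Ioi_self fun s ⟨hs0, hs⟩ ↦ ?_
    exact max_sub_posLog_eq_zero (not_le.1 fun h ↦ hs ⟨hs0, h⟩).le
  have hconst : ∫ s in (0 : ℝ)..1, f s = c := by
    rw [intervalIntegral.integral_congr (g := fun _ ↦ c), intervalIntegral.integral_const]
    · simp
    intro s hs
    obtain ⟨hs0, hs1⟩ : 0 ≤ s ∧ s ≤ 1 := by rwa [uIcc_of_le zero_le_one] at hs
    have : log⁺ s = 0 := (posLog_eq_zero_iff s).2 (abs_le.2 ⟨by linarith, hs1⟩)
    simp [f, this, hc]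
  have hlog : ∫ s in (1 : ℝ)..exp c, f s = c * (exp c - 1) - (exp c * c - exp c + 1) := by
    rw [intervalIntegral.integral_congr (g := fun s ↦ c - log s), intervalIntegral.integral_sub
      intervalIntegrable_const (intervalIntegral.intervalIntegrable_log'), integral_log]
    · simp only [intervalIntegral.integral_const, smul_eq_mul, log_one, log_exp]
      ring
    intro s hs
    obtain ⟨hs1, hsc⟩ : 1 ≤ s ∧ s ≤ exp c := by rwa [uIcc_of_le h1] at hs
    have hpos : log⁺ s = log s := posLog_eq_log (by rwa [abs_of_nonneg (by linarith)])
    have : log s ≤ c := (log_le_iff_le_exp (by linarith)).2 hsc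
    simp [f, hpos, this]
  rw [hsupp, ← intervalIntegral.integral_add_adjacent_intervals (b := 1)
    (hf.intervalIntegrable _ _) (hf.intervalIntegrable _ _), hconst, hlog]
  ring

lemma max_univSched_sub_eq {V y t : ℝ} (hV : 0 < V) (hy : 0 ≤ y) (ht : 0 < t) :
    max (univSched V t - y) 0 = max (1 - y - log⁺ ((exp 1 - 1) / V * t)) 0 := by
  have hk := exp_one_sub_one_pos
  set s := (exp 1 - 1) / V * t with hs_def
  have hs : 0 < s := by positivity
  have h_lt_one : t < V / (exp 1 - 1) ↔ s < 1 := by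
    rw [hs_def, lt_div_iff₀ hk, div_mul_eq_mul_div, div_lt_one hV, mul_comm]
  have h_lt_e : t < exp 1 * V / (exp 1 - 1) ↔ s < exp 1 := by
    rw [hs_def, lt_div_iff₀ hk, div_mul_eq_mul_div, div_lt_iff₀ hV, mul_comm t]
  unfold univSched
  split_ifs with h1 h2
  · rw [(posLog_eq_zero_iff s).2 (by rw [abs_of_pos hs]; exact (h_lt_one.1 h1).le)]
    ring_nf
  · have h1' : 1 ≤ s := not_lt.1 (mt h_lt_one.2 h1)
    rw [posLog_eq_log (by rwa [abs_of_pos hs]), hs_def]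
    ring_nf
  · rw [max_sub_posLog_eq_zero (c := 1 - y) ((exp_le_exp.2 (by linarith)).trans
      (not_lt.1 (mt h_lt_e.2 h2)))]
    exact max_eq_right (by linarith)

theorem integral_Ioi_max_univSched_sub {V y : ℝ} (hV : 0 < V) (hy : y ∈ Icc (0 : ℝ) 1) :
    ∫ t in Ioi (0 : ℝ), max (univSched V t - y) 0 = (exp (1 - y) - 1) / (exp 1 - 1) * V := by
  have hk := exp_one_sub_one_pos
  rw [setIntegral_congr_fun measurableSet_Ioi fun t ht ↦ max_univSched_sub_eq hV hy.1 ht,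
    integral_comp_mul_left_Ioi (fun s ↦ max (1 - y - log⁺ s) 0) 0 (div_pos hk hV), mul_zero,
    integral_Ioi_max_sub_posLog (sub_nonneg.2 hy.2), smul_eq_mul, inv_div]
  ring

lemma exp_one_sub_sub_one_le {y : ℝ} (hy : 0 < y) : exp (1 - y) - 1 ≤ (1 - y) / y := by
  have h : y ≤ exp (y - 1) := by linarith [add_one_le_exp (y - 1)]
  rw [sub_div, div_self hy.ne', sub_le_sub_iff_right, ← neg_sub, exp_neg, one_div]
  exact inv_anti₀ hy h

theorem integral_Ioi_max_univSched_sub_le {V y : ℝ} (hV : 0 < V) (hy : y ∈ Ioc (0 : ℝ) 1) :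
    ∫ t in Ioi (0 : ℝ), max (univSched V t - y) 0 ≤ 1 / (exp 1 - 1) * ((1 - y) / y) * V := by
  have hk := exp_one_sub_one_pos
  rw [integral_Ioi_max_univSched_sub hV (Ioc_subset_Icc_self hy), div_eq_inv_mul, one_div]
  gcongr
  exact exp_one_sub_sub_one_le hy.1

/-- The upper resource distribution of the universal schedule:
`A^∞_{U_V}(y) = ((e^{1-y} - 1)/(e-1))·V` for `y ∈ [0,1]`, which for `y ∈ (0,1]` is at most
`(1/(e-1))·((1-y)/y)·V`; in particular, with `c = e/(e-1)`, `U_V` satisfies the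
`c`-extendability condition `A^∞_{U_V}(y) ≤ (c-1)·((1-y)/y)·V` for all `y ∈ ((c-1)/c, 1]`. -/
theorem stmt5 (V : ℝ) (hV : 0 < V) :
    (∀ y ∈ Icc (0:ℝ) 1,
      (∫ t in Ioi (0:ℝ), max (univSched V t - y) 0) =
        (Real.exp (1 - y) - 1) / (Real.exp 1 - 1) * V) ∧
    (∀ y ∈ Ioc (0:ℝ) 1,
      (∫ t in Ioi (0:ℝ), max (univSched V t - y) 0) ≤
        1 / (Real.exp 1 - 1) * ((1 - y) / y) * V) ∧
    (∀ y : ℝ,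
      (Real.exp 1 / (Real.exp 1 - 1) - 1) / (Real.exp 1 / (Real.exp 1 - 1)) < y → y ≤ 1 →
      (∫ t in Ioi (0:ℝ), max (univSched V t - y) 0) ≤
        (Real.exp 1 / (Real.exp 1 - 1) - 1) * ((1 - y) / y) * V) := by
  have hk := exp_one_sub_one_pos.ne'
  have hc : exp 1 / (exp 1 - 1) - 1 = 1 / (exp 1 - 1) := by
    field_simp
    ring
  have hthreshold : (exp 1 / (exp 1 - 1) - 1) / (exp 1 / (exp 1 - 1)) = (exp 1)⁻¹ := by
    field_simp
    ring
  refine ⟨fun y hy ↦ integral_Ioi_max_univSched_sub hV hy,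
    fun y hy ↦ integral_Ioi_max_univSched_sub_le hV hy, fun y hy hy1 ↦ ?_⟩
  rw [hthreshold] at hy
  rw [hc]
  exact integral_Ioi_max_univSched_sub_le hV ⟨(inv_pos.2 (exp_pos 1)).trans hy, hy1⟩
end
end

section
/- Let V ≥ 0, let v > 0, r ∈ (0,1], p = v/r, and let H ≥ (e/(e−1))·max(V + v, p). Then: (a) ∫_0^H min(r, 1 − U_V(t)) dt ≥ v, so the water-filling step augmenting U_V by a job of volume v and requirement r with target completion time H succeeds; and (b) with h* = inf{h ∈ [0,1] : ∫_0^H min(r, max(h − U_V(t), 0)) dt ≥ v} and W(t) = U_V(t) + 1_{t<H}·min(r, max(h* − U_V(t), 0)), the augmented schedule is flatter than the universal schedule for volume V + v: ∫_0^C max(W(t) − y, 0) dt ≤ ∫_0^C max(U_{V+v}(t) − y, 0) dt for all C ≥ 0 and y ∈ [0,1]. -/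
open MeasureTheory Set Real

noncomputable section

/-- `f` is flatter than `g`. -/
def Flatter (f g : ℝ → ℝ) : Prop :=
  ∀ C : ℝ, 0 ≤ C → ∀ y ∈ Icc (0:ℝ) 1,
    (∫ t in (0:ℝ)..C, max (f t - y) 0) ≤ ∫ t in (0:ℝ)..C, max (g t - y) 0

/-- The smallest water level `h ∈ [0,1]` at which a job of volume `v` and
resource requirement `r` fits before time `C` on top of total usage `Rbar`. -/
def waterLevel (Rbar : ℝ → ℝ) (v r C : ℝ) : ℝ :=
  sInf {h : ℝ | h ∈ Icc (0:ℝ) 1 ∧ v ≤ ∫ t in (0:ℝ)..C, min r (max (h - Rbar t) 0)}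

/-!
Write `a = V / (e - 1)`: `U_V` is `1` on `[0, a]`, `1 - log (t / a)` on `[a, e a]` and `0`
afterwards, so `∫₀ᴴ (U_V - s)⁺ = a (e^{1-s} - 1)` for `s ∈ [0, 1]` and `H ≥ e a`. The volume filled
up to level `h` and the excess `(W - y)⁺` of the filled schedule are both signed sums of such
truncations of `U_V`. This makes (a) an explicit inequality, and the water level is attained by
continuity.

For (b), `U_{V+v} - U_V` is antitone beyond the plateau of `U_{V+v}`, so once `W` exceeds `U_{V+v}`
it stays above it, and after `H` it lies below it. It therefore suffices to compare the excesses
over `[0, H]`. For `y ≥ h` this holds pointwise; for `y ≤ min r h` the excess of `W` is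
`V + v - y H`, at most that of `U_{V+v}`, which has the same volume; for `r < y < h` the difference
of the two explicit integrals is affine in `e^{1-y}` and nonpositive at both ends.
-/

lemma add_min_max_sub_eq {u r h : ℝ} (hr : 0 ≤ r) :
    u + min r (max (h - u) 0) = max u (min (u + r) h) := by
  simp only [max_def, min_def]; split_ifs <;> linarith

lemma min_max_sub_eq {u r h : ℝ} (hr : 0 ≤ r) :
    min r (max (h - u) 0) = r + max (u - h) 0 - max (u - (h - r)) 0 := by
  simp only [max_def, min_def]; split_ifs <;> linarith

lemma max_add_min_max_sub_sub_eq {u r h y : ℝ} (hr : 0 ≤ r) (hyh : y ≤ h) :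
    max (u + min r (max (h - u) 0) - y) 0
      = max (u - (y - r)) 0 - max (u - (h - r)) 0 + max (u - h) 0 := by
  simp only [max_def, min_def]; split_ifs <;> linarith

lemma max_add_min_max_sub_sub_of_le {u r h y : ℝ} (hr : 0 ≤ r) (hhy : h ≤ y) :
    max (u + min r (max (h - u) 0) - y) 0 = max (u - y) 0 := by
  simp only [max_def, min_def]; split_ifs <;> linarith

lemma mul_le_of_mem_Icc {a b x₁ x₂ x : ℝ} (hx : x ∈ Icc x₁ x₂) (h₁ : a * x₁ ≤ b)
    (h₂ : a * x₂ ≤ b) : a * x ≤ b := by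
  rcases le_total 0 a with ha | ha
  · exact (mul_le_mul_of_nonneg_left hx.2 ha).trans h₂
  · exact (mul_le_mul_of_nonpos_left hx.1 ha).trans h₁

lemma antitone_max_sub {f : ℝ → ℝ} (hf : Antitone f) (y : ℝ) :
    Antitone fun t => max (f t - y) 0 :=
  fun _ _ hst => max_le_max (sub_le_sub_right (hf hst) y) le_rfl

lemma monotone_min_max_sub {R : ℝ → ℝ} (hR : Antitone R) (r h : ℝ) :
    Monotone fun t => min r (max (h - R t) 0) :=
  fun _ _ hst => min_le_min le_rfl (max_le_max (sub_le_sub_left (hR hst) h) le_rfl)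

def augment (R : ℝ → ℝ) (r h C : ℝ) (t : ℝ) : ℝ :=
  R t + if t < C then min r (max (h - R t) 0) else 0

lemma le_augment (R : ℝ → ℝ) {r : ℝ} (hr : 0 ≤ r) (h C t : ℝ) :
    R t ≤ augment R r h C t := by
  refine le_add_of_nonneg_right ?_
  split_ifs
  exacts [le_min hr (le_max_right _ _), le_rfl]

lemma antitone_augment {R : ℝ → ℝ} (hR : Antitone R) {r : ℝ} (hr : 0 ≤ r) (h C : ℝ) :
    Antitone (augment R r h C) := by
  intro s t hst
  unfold augment
  by_cases ht : t < C
  · rw [if_pos ht, if_pos (hst.trans_lt ht), add_min_max_sub_eq hr, add_min_max_sub_eq hr]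
    exact max_le_max (hR hst) (min_le_min (add_le_add_left (hR hst) r) le_rfl)
  · rw [if_neg ht, add_zero]
    exact (hR hst).trans (le_augment R hr h C s)

lemma integral_le_of_crossing {f g : ℝ → ℝ} {C H : ℝ}
    (hf : ∀ a b, IntervalIntegrable f volume a b) (hg : ∀ a b, IntervalIntegrable g volume a b)
    (hC : 0 ≤ C) (hH : ∫ t in (0:ℝ)..H, f t ≤ ∫ t in (0:ℝ)..H, g t)
    (htail : ∀ t, H ≤ t → f t ≤ g t)
    (hcross : ∀ s t, s ≤ t → g s < f s → g t ≤ f t) :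
    ∫ t in (0:ℝ)..C, f t ≤ ∫ t in (0:ℝ)..C, g t := by
  by_cases hx : ∃ s ∈ Icc 0 C, g s < f s
  · obtain ⟨s, hs, hgf⟩ := hx
    have hCL : ∫ t in C..max C H, g t ≤ ∫ t in C..max C H, f t :=
      intervalIntegral.integral_mono_on (le_max_left C H) (hg _ _) (hf _ _)
        fun t ht => hcross s t (hs.2.trans ht.1) hgf
    have hHL : ∫ t in H..max C H, f t ≤ ∫ t in H..max C H, g t :=
      intervalIntegral.integral_mono_on (le_max_right C H) (hf _ _) (hg _ _)
        fun t ht => htail t ht.1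
    have := intervalIntegral.integral_add_adjacent_intervals (hf 0 C) (hf C (max C H))
    have := intervalIntegral.integral_add_adjacent_intervals (hg 0 C) (hg C (max C H))
    have := intervalIntegral.integral_add_adjacent_intervals (hf 0 H) (hf H (max C H))
    have := intervalIntegral.integral_add_adjacent_intervals (hg 0 H) (hg H (max C H))
    linarith
  · push Not at hx
    exact intervalIntegral.integral_mono_on hC (hf _ _) (hg _ _) hx

lemma continuous_integral_min_max_sub {R : ℝ → ℝ} (hR : Measurable R) (r a b : ℝ) :
    Continuous fun h => ∫ t in a..b, min r (max (h - R t) 0) := by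
  refine intervalIntegral.continuous_of_dominated_interval (bound := fun _ => |r|)
    (fun h => (measurable_const.min
      ((measurable_const.sub hR).max measurable_const)).aestronglyMeasurable)
    (fun h => ae_of_all _ fun t _ => ?_) intervalIntegrable_const
    (ae_of_all _ fun t _ => by fun_prop)
  have hm : 0 ≤ max (h - R t) 0 := le_max_right _ _
  rw [Real.norm_eq_abs]
  rcases le_total 0 r with hr | hr
  · rw [abs_of_nonneg hr, abs_of_nonneg (le_min hr hm)]
    exact min_le_left _ _
  · rw [min_eq_left (hr.trans hm)]

lemma waterLevel_spec {R : ℝ → ℝ} (hR : Measurable R) {v r C : ℝ}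
    (h₀ : ∫ t in (0:ℝ)..C, min r (max (0 - R t) 0) ≤ v)
    (h₁ : v ≤ ∫ t in (0:ℝ)..C, min r (max (1 - R t) 0)) :
    waterLevel R v r C ≤ 1 ∧
      ∫ t in (0:ℝ)..C, min r (max (waterLevel R v r C - R t) 0) = v := by
  set g := fun h => ∫ t in (0:ℝ)..C, min r (max (h - R t) 0)
  have hg : Continuous g := continuous_integral_min_max_sub hR r 0 C
  set S := {h : ℝ | h ∈ Icc (0:ℝ) 1 ∧ v ≤ g h}
  have hS1 : (1:ℝ) ∈ S := ⟨⟨zero_le_one, le_rfl⟩, h₁⟩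
  have hbdd : BddBelow S := ⟨0, fun _ hx => hx.1.1⟩
  have hmem : sInf S ∈ S :=
    (isClosed_Icc.inter (isClosed_le continuous_const hg)).csInf_mem ⟨1, hS1⟩ hbdd
  obtain ⟨h', hh', hgh'⟩ := intermediate_value_Icc hmem.1.1 hg.continuousOn ⟨h₀, hmem.2⟩
  have : h' = sInf S :=
    le_antisymm hh'.2 (csInf_le hbdd ⟨⟨hh'.1, hh'.2.trans hmem.1.2⟩, hgh'.ge⟩)
  refine ⟨hmem.1.2, ?_⟩
  change g (sInf S) = v
  rwa [← this]

lemma integral_sub_log_div {b : ℝ} (hb : 0 < b) (c q : ℝ) :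
    ∫ t in b..b * exp q, (c - log (t / b)) = b * ((c - q + 1) * exp q - c - 1) := by
  rw [intervalIntegral.integral_comp_div (fun x => c - log x) hb.ne', div_self hb.ne',
    mul_div_cancel_left₀ _ hb.ne', intervalIntegral.integral_sub intervalIntegrable_const
      intervalIntegral.intervalIntegrable_log', integral_log, intervalIntegral.integral_const,
    log_exp, log_one, smul_eq_mul, smul_eq_mul]
  ring

lemma univSched_eq_one_of_lt {V t : ℝ} (ht : t < V / (exp 1 - 1)) : univSched V t = 1 :=
  if_pos ht

lemma univSched_eq_zero_of_le {V t : ℝ} (hV : 0 ≤ V) (ht : exp 1 * V / (exp 1 - 1) ≤ t) :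
    univSched V t = 0 := by
  have : V / (exp 1 - 1) ≤ exp 1 * V / (exp 1 - 1) := by
    gcongr
    · exact exp_one_sub_one_pos.le
    · exact le_mul_of_one_le_left hV (by linarith [add_one_le_exp 1])
  rw [univSched, if_neg (by linarith), if_neg (by linarith)]

lemma univSched_zero_of_nonneg {t : ℝ} (ht : 0 ≤ t) : univSched 0 t = 0 :=
  univSched_eq_zero_of_le le_rfl (by simpa using ht)

lemma univSched_eq_max_min {V t : ℝ} (hV : 0 < V) (ht : 0 < t) :
    univSched V t = max 0 (min 1 (1 - log (t / (V / (exp 1 - 1))))) := by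
  have hE := exp_one_sub_one_pos
  have hA : 0 < V / (exp 1 - 1) := div_pos hV hE
  have hlog : log ((exp 1 - 1) * t / V) = log (t / (V / (exp 1 - 1))) := by
    congr 1; field_simp
  unfold univSched
  split_ifs with h₁ h₂
  · have : log (t / (V / (exp 1 - 1))) < 0 := log_neg (div_pos ht hA) ((div_lt_one hA).2 h₁)
    rw [min_eq_left (by linarith), max_eq_right zero_le_one]
  · have h0 : 0 ≤ log (t / (V / (exp 1 - 1))) :=
      log_nonneg ((one_le_div hA).2 (not_lt.1 h₁))
    have h1 : log (t / (V / (exp 1 - 1))) ≤ 1 := by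
      rw [log_le_iff_le_exp (div_pos ht hA), div_le_iff₀ hA, ← mul_div_assoc]
      exact h₂.le
    rw [hlog, min_eq_right (by linarith), max_eq_right (by linarith)]
  · have : 1 ≤ log (t / (V / (exp 1 - 1))) := by
      rw [le_log_iff_exp_le (div_pos ht hA), le_div_iff₀ hA, ← mul_div_assoc]
      exact not_lt.1 h₂
    rw [max_eq_left (min_le_of_right_le (by linarith))]

lemma univSched_mem_Icc {V : ℝ} (hV : 0 ≤ V) (t : ℝ) : univSched V t ∈ Icc (0 : ℝ) 1 := by
  rcases lt_or_ge t (V / (exp 1 - 1)) with ht | ht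
  · simp [univSched_eq_one_of_lt ht]
  rcases hV.eq_or_lt with rfl | hV
  · simp [univSched_zero_of_nonneg (by simpa using ht)]
  rw [univSched_eq_max_min hV (lt_of_lt_of_le (div_pos hV exp_one_sub_one_pos) ht)]
  exact ⟨le_max_left _ _, max_le zero_le_one (min_le_left _ _)⟩

lemma univSched_nonneg {V : ℝ} (hV : 0 ≤ V) (t : ℝ) : 0 ≤ univSched V t :=
  (univSched_mem_Icc hV t).1

lemma univSched_le_one {V : ℝ} (hV : 0 ≤ V) (t : ℝ) : univSched V t ≤ 1 :=
  (univSched_mem_Icc hV t).2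

lemma univSched_antitone {V : ℝ} (hV : 0 ≤ V) : Antitone (univSched V) := by
  intro s t hst
  rcases lt_or_ge s (V / (exp 1 - 1)) with hs | hs
  · rw [univSched_eq_one_of_lt hs]; exact univSched_le_one hV t
  rcases hV.eq_or_lt with rfl | hV
  · simp [univSched_zero_of_nonneg ((by simpa using hs : (0:ℝ) ≤ s).trans hst),
      univSched_nonneg le_rfl s]
  have hA : 0 < V / (exp 1 - 1) := div_pos hV exp_one_sub_one_pos
  have hs0 : 0 < s := hA.trans_le hs
  rw [univSched_eq_max_min hV hs0, univSched_eq_max_min hV (hs0.trans_le hst)]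
  have := log_le_log (div_pos hs0 hA) (div_le_div_of_nonneg_right hst hA.le)
  exact max_le_max le_rfl (min_le_min le_rfl (by linarith))

lemma univSched_le_univSched {V V' : ℝ} (hV : 0 ≤ V) (hVV' : V ≤ V') (t : ℝ) :
    univSched V t ≤ univSched V' t := by
  rcases lt_or_ge t (V' / (exp 1 - 1)) with ht | ht
  · rw [univSched_eq_one_of_lt ht]; exact univSched_le_one hV t
  rcases hV.eq_or_lt with rfl | hV
  · rw [univSched_zero_of_nonneg ((div_nonneg hVV' exp_one_sub_one_pos.le).trans ht)]
    exact univSched_nonneg hVV' t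
  have hA : 0 < V / (exp 1 - 1) := div_pos hV exp_one_sub_one_pos
  have hAA' : V / (exp 1 - 1) ≤ V' / (exp 1 - 1) :=
    div_le_div_of_nonneg_right hVV' exp_one_sub_one_pos.le
  have ht0 : 0 < t := hA.trans_le (hAA'.trans ht)
  rw [univSched_eq_max_min hV ht0, univSched_eq_max_min (hV.trans_le hVV') ht0]
  have := log_le_log (div_pos ht0 (hA.trans_le hAA')) (div_le_div_of_nonneg_left ht0.le hA hAA')
  exact max_le_max le_rfl (min_le_min le_rfl (by linarith))

lemma integral_max_univSched_sub {V s H : ℝ} (hV : 0 ≤ V) (hs0 : 0 ≤ s) (hs1 : s ≤ 1)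
    (hH : exp 1 * V / (exp 1 - 1) ≤ H) :
    ∫ t in (0:ℝ)..H, max (univSched V t - s) 0 = V / (exp 1 - 1) * (exp (1 - s) - 1) := by
  rcases hV.eq_or_lt with rfl | hV
  · simp only [mul_zero, zero_div] at hH ⊢
    rw [intervalIntegral.integral_congr_Ioo_of_le hH (g := fun _ => 0)
      fun t ht => by simp [univSched_zero_of_nonneg ht.1.le, hs0]]
    simp
  set A := V / (exp 1 - 1) with hA_def
  have hA : 0 < A := div_pos hV exp_one_sub_one_pos
  have h₁ : A ≤ A * exp (1 - s) := le_mul_of_one_le_right hA.le (one_le_exp (by linarith))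
  have h₂ : A * exp (1 - s) ≤ H := by
    calc A * exp (1 - s) ≤ A * exp 1 := by gcongr; linarith
      _ = exp 1 * V / (exp 1 - 1) := by rw [hA_def]; ring
      _ ≤ H := hH
  have hint (a b : ℝ) : IntervalIntegrable (fun t => max (univSched V t - s) 0) volume a b :=
    (antitone_max_sub (univSched_antitone hV.le) s).intervalIntegrable
  rw [← intervalIntegral.integral_add_adjacent_intervals (hint 0 A) (hint A H),
    ← intervalIntegral.integral_add_adjacent_intervals (hint A _) (hint _ H)]
  have hplateau : ∫ t in (0:ℝ)..A, max (univSched V t - s) 0 = A * (1 - s) := by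
    rw [intervalIntegral.integral_congr_Ioo_of_le hA.le (g := fun _ => 1 - s)
      fun t ht => by simp [univSched_eq_one_of_lt ht.2, hs1]]
    simp [mul_sub]
  have hslope : ∫ t in A..A * exp (1 - s), max (univSched V t - s) 0
      = ∫ t in A..A * exp (1 - s), ((1 - s) - log (t / A)) := by
    refine intervalIntegral.integral_congr_Ioo_of_le h₁ fun t ht => ?_
    have ht0 : 0 < t := hA.trans ht.1
    have hlog0 : 0 ≤ log (t / A) := log_nonneg ((one_le_div hA).2 ht.1.le)
    have hlog1 : log (t / A) ≤ 1 - s := by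
      rw [log_le_iff_le_exp (div_pos ht0 hA), div_le_iff₀ hA, mul_comm]; exact ht.2.le
    rw [univSched_eq_max_min hV ht0, ← hA_def, min_eq_right (by linarith),
      max_eq_right (show 0 ≤ 1 - log (t / A) by linarith),
      max_eq_left (show 0 ≤ 1 - log (t / A) - s by linarith)]
    ring
  have htail : ∫ t in A * exp (1 - s)..H, max (univSched V t - s) 0 = 0 := by
    rw [intervalIntegral.integral_congr_Ioo_of_le h₂ (g := fun _ => 0) fun t ht => ?_]
    · simp
    have ht0 : 0 < t := (hA.trans_le h₁).trans ht.1
    have hlog : 1 - s ≤ log (t / A) := by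
      rw [le_log_iff_exp_le (div_pos ht0 hA), le_div_iff₀ hA, mul_comm]; exact ht.1.le
    rw [univSched_eq_max_min hV ht0, ← hA_def, max_eq_right]
    exact sub_nonpos.2 (max_le hs0 ((min_le_right 1 _).trans (by linarith)))
  rw [hplateau, hslope, integral_sub_log_div hA, htail]
  ring

lemma integral_univSched {V H : ℝ} (hV : 0 ≤ V) (hH : exp 1 * V / (exp 1 - 1) ≤ H) :
    ∫ t in (0:ℝ)..H, univSched V t = V := by
  have := integral_max_univSched_sub hV le_rfl zero_le_one hH
  simpa only [sub_zero, exp_one_sub_one_pos.ne', div_mul_cancel₀, Ne, not_false_eq_true,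
    max_eq_left (univSched_nonneg hV _)] using this

lemma sub_mul_le_integral_max_univSched_sub {V H : ℝ} (hV : 0 ≤ V)
    (hH : exp 1 * V / (exp 1 - 1) ≤ H) (y : ℝ) :
    V - y * H ≤ ∫ t in (0:ℝ)..H, max (univSched V t - y) 0 := by
  have hH0 : 0 ≤ H := (div_nonneg (mul_nonneg (exp_pos 1).le hV) exp_one_sub_one_pos.le).trans hH
  calc V - y * H = ∫ t in (0:ℝ)..H, (univSched V t - y) := by
        rw [intervalIntegral.integral_sub ((univSched_antitone hV).intervalIntegrable)
          intervalIntegrable_const, integral_univSched hV hH, intervalIntegral.integral_const,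
          smul_eq_mul, sub_zero, mul_comm]
    _ ≤ _ := intervalIntegral.integral_mono_on hH0
        ((univSched_antitone hV).intervalIntegrable.sub intervalIntegrable_const)
        (antitone_max_sub (univSched_antitone hV) y).intervalIntegrable
        fun t _ => le_max_left _ _

lemma integral_min_max_sub_univSched {V r h H : ℝ} (hV : 0 ≤ V) (hr : 0 ≤ r) (hrh : r ≤ h)
    (hh : h ≤ 1) (hH : exp 1 * V / (exp 1 - 1) ≤ H) :
    ∫ t in (0:ℝ)..H, min r (max (h - univSched V t) 0)
      = r * H - V / (exp 1 - 1) * exp (1 - h) * (exp r - 1) := by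
  have hint (s : ℝ) := (antitone_max_sub (univSched_antitone hV) s).intervalIntegrable
    (μ := volume) (a := 0) (b := H)
  simp only [min_max_sub_eq hr]
  rw [intervalIntegral.integral_sub (intervalIntegrable_const.add (hint h)) (hint (h - r)),
    intervalIntegral.integral_add intervalIntegrable_const (hint h),
    integral_max_univSched_sub hV (hr.trans hrh) hh hH,
    integral_max_univSched_sub hV (by linarith) (by linarith) hH,
    intervalIntegral.integral_const, smul_eq_mul, sub_zero,
    show 1 - (h - r) = (1 - h) + r by ring, exp_add]
  ring

lemma le_integral_min_max_one_sub_univSched {V v r H : ℝ} (hV : 0 ≤ V) (hv : 0 ≤ v)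
    (hr0 : 0 < r) (hr1 : r ≤ 1) (hH : exp 1 / (exp 1 - 1) * max (V + v) (v / r) ≤ H) :
    v ≤ ∫ t in (0:ℝ)..H, min r (max (1 - univSched V t) 0) := by
  have hE := exp_one_sub_one_pos
  set M := max (V + v) (v / r)
  have hVM : V + v ≤ M := le_max_left _ _
  have hvM : v ≤ r * M := by
    have : v / r ≤ M := le_max_right _ _
    rwa [div_le_iff₀ hr0, mul_comm] at this
  have hMH : exp 1 * M ≤ (exp 1 - 1) * H := by
    rwa [div_mul_eq_mul_div, div_le_iff₀ hE, mul_comm H] at hH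
  have hHV : exp 1 * V / (exp 1 - 1) ≤ H := by
    rw [div_le_iff₀ hE]; nlinarith [exp_pos 1]
  rw [integral_min_max_sub_univSched hV hr0.le hr1 le_rfl hHV, sub_self, exp_zero, mul_one,
    le_sub_iff_add_le, ← mul_le_mul_iff_of_pos_right hE, add_mul, mul_right_comm (V / _),
    div_mul_cancel₀ _ hE.ne']
  have hw₁ : exp r - 1 ≤ r * (exp 1 - 1) := by
    have := convexOn_exp.2 (mem_univ 0) (mem_univ 1) (sub_nonneg.2 hr1) hr0.le (by ring)
    simp only [smul_eq_mul, mul_zero, mul_one, zero_add, exp_zero] at this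
    linarith
  have hw₂ : (exp r - 1) * (1 - r) ≤ r := by
    have h₁ := one_sub_le_exp_neg r
    have h₂ : exp r * exp (-r) = 1 := by rw [← exp_add, add_neg_cancel, exp_zero]
    nlinarith [exp_pos r]
  have hw₀ : 0 ≤ exp r - 1 := sub_nonneg.2 (one_le_exp hr0.le)
  refine le_of_mul_le_mul_left ?_ hr0
  -- `r² e M - r ((e - 1) v + V (exp r - 1))` is the sum of the first three products below
  nlinarith [mul_nonneg (by nlinarith [exp_pos 1] : 0 ≤ r * exp 1 - (exp r - 1))
      (sub_nonneg.2 hvM),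
    mul_nonneg hr0.le (mul_nonneg hw₀ (sub_nonneg.2 hVM)),
    mul_nonneg hv (by linarith : 0 ≤ r - (exp r - 1) * (1 - r)),
    mul_le_mul_of_nonneg_left hMH (sq_nonneg r)]

lemma univSched_sub_univSched_eq_min {V V' t : ℝ} (hV : 0 < V) (hVV' : V ≤ V')
    (ht : V' / (exp 1 - 1) ≤ t) :
    univSched V' t - univSched V t = min (log (V' / V)) (univSched V' t) := by
  have hE := exp_one_sub_one_pos
  have hV' : 0 < V' := hV.trans_le hVV'
  have hA' : 0 < V' / (exp 1 - 1) := div_pos hV' hE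
  have ht0 : 0 < t := hA'.trans_le ht
  have hc : 0 ≤ log (V' / V) := log_nonneg ((one_le_div hV).2 hVV')
  have hlog : log (t / (V / (exp 1 - 1))) = log (t / (V' / (exp 1 - 1))) + log (V' / V) := by
    rw [← log_mul (div_pos ht0 hA').ne' (div_pos hV' hV).ne']
    congr 1
    field_simp
  have hlog' : 0 ≤ log (t / (V' / (exp 1 - 1))) := log_nonneg ((one_le_div hA').2 ht)
  rw [univSched_eq_max_min hV ht0, univSched_eq_max_min hV' ht0, hlog]
  simp only [max_def, min_def]; split_ifs <;> linarith

lemma univSched_sub_univSched_antitoneOn {V V' : ℝ} (hV : 0 ≤ V) (hVV' : V ≤ V') :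
    AntitoneOn (fun t => univSched V' t - univSched V t) (Ici (V' / (exp 1 - 1))) := by
  intro s hs t ht hst
  rcases hV.eq_or_lt with rfl | hV
  · have hA' : 0 ≤ V' / (exp 1 - 1) := div_nonneg hVV' exp_one_sub_one_pos.le
    simp only [univSched_zero_of_nonneg (hA'.trans hs), univSched_zero_of_nonneg (hA'.trans ht)]
    exact sub_le_sub_right (univSched_antitone hVV' hst) 0
  simp only [univSched_sub_univSched_eq_min hV hVV' hs, univSched_sub_univSched_eq_min hV hVV' ht]
  exact min_le_min le_rfl (univSched_antitone (hV.le.trans hVV') hst)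

lemma univSched_le_augment_of_lt {V v r h H s t : ℝ} (hV : 0 ≤ V) (hv : 0 ≤ v) (hr : 0 ≤ r)
    (hh : h ≤ 1) (hH : exp 1 * (V + v) / (exp 1 - 1) ≤ H) (hst : s ≤ t)
    (hs : univSched (V + v) s < augment (univSched V) r h H s) :
    univSched (V + v) t ≤ augment (univSched V) r h H t := by
  have hVv : V ≤ V + v := le_add_of_nonneg_right hv
  have hUU' := univSched_le_univSched hV hVv
  have hsH : s < H := by
    by_contra hsH
    rw [augment, if_neg hsH, add_zero] at hs
    exact (hUU' s).not_gt hs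
  rw [augment, if_pos hsH, add_min_max_sub_eq hr, lt_max_iff] at hs
  replace hs := hs.resolve_left (hUU' s).not_gt
  rcases le_or_gt (exp 1 * (V + v) / (exp 1 - 1)) t with ht | ht
  · rw [univSched_eq_zero_of_le (hV.trans hVv) ht]
    exact (univSched_nonneg hV t).trans (le_augment _ hr h H t)
  have hA's : (V + v) / (exp 1 - 1) ≤ s := by
    by_contra hA's
    rw [univSched_eq_one_of_lt (not_le.1 hA's)] at hs
    linarith [min_le_right (univSched V s + r) h]
  have hdiff := univSched_sub_univSched_antitoneOn hV hVv hA's (mem_Ici.2 (hA's.trans hst)) hst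
  have hU't := univSched_antitone (hV.trans hVv) hst
  rw [augment, if_pos (ht.trans_le hH), add_min_max_sub_eq hr]
  refine le_max_of_le_right (le_min ?_ ?_)
  · linarith [min_le_left (univSched V s + r) h]
  · linarith [min_le_right (univSched V s + r) h]

lemma integral_max_add_min_max_sub_sub_of_le {V v r h H y : ℝ} (hV : 0 ≤ V) (hr : 0 ≤ r)
    (hyr : y ≤ r) (hyh : y ≤ h) (hH : exp 1 * V / (exp 1 - 1) ≤ H)
    (hfill : ∫ t in (0:ℝ)..H, min r (max (h - univSched V t) 0) = v) :
    ∫ t in (0:ℝ)..H, max (univSched V t + min r (max (h - univSched V t) 0) - y) 0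
      = V + v - y * H := by
  have hU := (univSched_antitone hV).intervalIntegrable (μ := volume) (a := 0) (b := H)
  have hfill' := (monotone_min_max_sub (univSched_antitone hV) r h).intervalIntegrable
    (μ := volume) (a := 0) (b := H)
  calc _ = ∫ t in (0:ℝ)..H, (univSched V t + min r (max (h - univSched V t) 0) - y) := by
        refine intervalIntegral.integral_congr fun t _ => max_eq_left (sub_nonneg.2 ?_)
        rw [add_min_max_sub_eq hr]
        exact le_max_of_le_right (le_min (by linarith [univSched_nonneg hV t]) hyh)
    _ = V + v - y * H := by
        rw [intervalIntegral.integral_sub (hU.add hfill') intervalIntegrable_const,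
          intervalIntegral.integral_add hU hfill', integral_univSched hV hH, hfill,
          intervalIntegral.integral_const, smul_eq_mul, sub_zero, mul_comm]

lemma integral_max_add_min_max_sub_sub {V r h H y : ℝ} (hV : 0 ≤ V) (hr : 0 ≤ r)
    (hry : r ≤ y) (hyh : y ≤ h) (hh : h ≤ 1) (hH : exp 1 * V / (exp 1 - 1) ≤ H) :
    ∫ t in (0:ℝ)..H, max (univSched V t + min r (max (h - univSched V t) 0) - y) 0
      = V / (exp 1 - 1) * (exp (1 - y) * exp r - exp (1 - h) * exp r + exp (1 - h) - 1) := by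
  have hint (s : ℝ) : IntervalIntegrable (fun t => max (univSched V t - s) 0) volume 0 H :=
    (antitone_max_sub (univSched_antitone hV) s).intervalIntegrable
  simp only [max_add_min_max_sub_sub_eq hr hyh]
  rw [intervalIntegral.integral_add ((hint _).sub (hint _)) (hint _),
    intervalIntegral.integral_sub (hint _) (hint _),
    integral_max_univSched_sub hV (by linarith) (by linarith) hH,
    integral_max_univSched_sub hV (by linarith) (by linarith) hH,
    integral_max_univSched_sub hV (by linarith) hh hH,
    show 1 - (y - r) = (1 - y) + r by ring, show 1 - (h - r) = (1 - h) + r by ring,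
    exp_add, exp_add]
  ring

lemma integral_max_augment_sub_le {V v r h H y : ℝ} (hV : 0 ≤ V) (hv : 0 ≤ v) (hr : 0 ≤ r)
    (hh : h ≤ 1) (hH : exp 1 * (V + v) / (exp 1 - 1) ≤ H)
    (hfill : ∫ t in (0:ℝ)..H, min r (max (h - univSched V t) 0) = v) (hy0 : 0 ≤ y)
    (hy1 : y ≤ 1) :
    ∫ t in (0:ℝ)..H, max (augment (univSched V) r h H t - y) 0
      ≤ ∫ t in (0:ℝ)..H, max (univSched (V + v) t - y) 0 := by
  have hE := exp_one_sub_one_pos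
  have hVv : V ≤ V + v := le_add_of_nonneg_right hv
  have hHV : exp 1 * V / (exp 1 - 1) ≤ H := le_trans (by gcongr) hH
  have hH0 : 0 ≤ H := (div_nonneg (mul_nonneg (exp_pos 1).le hV) hE.le).trans hHV
  rw [intervalIntegral.integral_congr_Ioo_of_le hH0
    (g := fun t => max (univSched V t + min r (max (h - univSched V t) 0) - y) 0)
    fun t ht => by simp only [augment, if_pos ht.2]]
  rcases le_or_gt h y with hhy | hyh
  · simp only [max_add_min_max_sub_sub_of_le hr hhy]
    exact intervalIntegral.integral_mono_on hH0
      (antitone_max_sub (univSched_antitone hV) y).intervalIntegrable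
      (antitone_max_sub (univSched_antitone (hV.trans hVv)) y).intervalIntegrable
      fun t _ => max_le_max (sub_le_sub_right (univSched_le_univSched hV hVv t) y) le_rfl
  rcases le_or_gt y r with hyr | hry
  · rw [integral_max_add_min_max_sub_sub_of_le hV hr hyr hyh.le hHV hfill]
    exact sub_mul_le_integral_max_univSched_sub (hV.trans hVv) hH y
  have hv' := integral_min_max_sub_univSched hV hr (hry.trans hyh).le hh hHV
  have hlow := sub_mul_le_integral_max_univSched_sub (hV.trans hVv) hH r
  rw [hfill] at hv'
  rw [integral_max_univSched_sub (hV.trans hVv) hr (hry.le.trans hy1) hH] at hlow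
  rw [integral_max_add_min_max_sub_sub hV hr hry.le hyh.le hh hHV,
    integral_max_univSched_sub (hV.trans hVv) hy0 hy1 hH]
  set A := V / (exp 1 - 1)
  set A' := (V + v) / (exp 1 - 1)
  have hAV : A * (exp 1 - 1) = V := div_mul_cancel₀ V hE.ne'
  have hAA' : A ≤ A' := div_le_div_of_nonneg_right hVv hE.le
  have he : exp (1 - r) * exp r = exp 1 := by rw [← exp_add, sub_add_cancel]
  have hzh : 1 ≤ exp (1 - h) := one_le_exp (by linarith)
  -- the difference of the two sides is affine in `exp (1 - y)`: check the ends `y = h`, `y = r`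
  have key : (A * exp r - A') * exp (1 - y)
      ≤ A * exp (1 - h) * exp r - A * exp (1 - h) + A - A' := by
    refine mul_le_of_mem_Icc (x₁ := exp (1 - h)) (x₂ := exp (1 - r))
      ⟨exp_le_exp.2 (by linarith), exp_le_exp.2 (by linarith)⟩ ?_ ?_
    · nlinarith [mul_nonneg (sub_nonneg.2 hAA') (sub_nonneg.2 hzh)]
    · linear_combination hlow + A * he + hAV - hv'
  linear_combination key

lemma flatter_augment_univSched {V v r h H : ℝ} (hV : 0 ≤ V) (hv : 0 ≤ v) (hr : 0 ≤ r)
    (hh : h ≤ 1) (hH : exp 1 * (V + v) / (exp 1 - 1) ≤ H)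
    (hfill : ∫ t in (0:ℝ)..H, min r (max (h - univSched V t) 0) = v) :
    Flatter (augment (univSched V) r h H) (univSched (V + v)) := by
  intro C hC y ⟨hy0, hy1⟩
  have hVv : V ≤ V + v := le_add_of_nonneg_right hv
  have hW := antitone_max_sub (antitone_augment (univSched_antitone hV) hr h H) y
  have hU' := antitone_max_sub (univSched_antitone (hV.trans hVv)) y
  refine integral_le_of_crossing (fun _ _ => hW.intervalIntegrable)
    (fun _ _ => hU'.intervalIntegrable) hC
    (integral_max_augment_sub_le hV hv hr hh hH hfill hy0 hy1) (fun t ht => ?_)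
    (fun s t hst hs => ?_)
  · simp only [augment, if_neg (not_lt.2 ht), add_zero]
    exact max_le_max (sub_le_sub_right (univSched_le_univSched hV hVv t) y) le_rfl
  · have hs' : univSched (V + v) s < augment (univSched V) r h H s := by
      by_contra hs'
      exact hs.not_ge (max_le_max (sub_le_sub_right (not_lt.1 hs') y) le_rfl)
    exact max_le_max (sub_le_sub_right (univSched_le_augment_of_lt hV hv hr hh hH hst hs') y)
      le_rfl

/-- For `H ≥ (e/(e-1))·max(V+v, v/r)`, (a) a water-filling step augmenting the universal
schedule `U_V` by a job of volume `v` and requirement `r` with target completion time `H`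
succeeds, and (b) the augmented schedule is flatter than the universal schedule `U_{V+v}`. -/
theorem stmt6 (V v r H : ℝ) (hV : 0 ≤ V) (hv : 0 < v) (hr0 : 0 < r) (hr1 : r ≤ 1)
    (hH : Real.exp 1 / (Real.exp 1 - 1) * max (V + v) (v / r) ≤ H) :
    (v ≤ ∫ t in (0:ℝ)..H, min r (1 - univSched V t)) ∧
    Flatter
      (fun t => univSched V t +
        if t < H then min r (max (waterLevel (univSched V) v r H - univSched V t) 0) else 0)
      (univSched (V + v)) := by
  have hcap := le_integral_min_max_one_sub_univSched hV hv.le hr0 hr1 hH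
  have hH' : exp 1 * (V + v) / (exp 1 - 1) ≤ H :=
    calc exp 1 * (V + v) / (exp 1 - 1) = exp 1 / (exp 1 - 1) * (V + v) := by ring
      _ ≤ H := (mul_le_mul_of_nonneg_left (le_max_left _ _)
        (div_pos (exp_pos 1) exp_one_sub_one_pos).le).trans hH
  have hempty : ∫ t in (0:ℝ)..H, min r (max (0 - univSched V t) 0) ≤ v := by
    simp only [zero_sub, max_eq_right (neg_nonpos.2 (univSched_nonneg hV _)), min_eq_right hr0.le]
    simpa using hv.le
  obtain ⟨hh, hfill⟩ := waterLevel_spec (univSched_antitone hV).measurable hempty hcap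
  refine ⟨?_, flatter_augment_univSched hV hv.le hr0.le hh hH' hfill⟩
  simpa only [max_eq_left (sub_nonneg.2 (univSched_le_one hV _))] using hcap
end
end

section
/- For every n ≥ 1 and every sequence of jobs (v_j, r_j)_{j=1}^n with v_j > 0 and r_j ∈ (0,1], there exists a feasible schedule R = (R_j)_{j=1}^n such that for every j ∈ {1,…,n}, C_j(R) ≤ (e/(e−1))·max(Σ_{i=1}^j v_i, max_{1≤i≤j} v_i/r_i). (The water-filling algorithm achieves competitive ratio e/(e−1) for online makespan minimization in the list-scheduling model: every prefix's completion times stay within e/(e−1) of that prefix's optimal makespan.) -/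
/-!
Put `ρ = e/(e-1)` and give job `j` the deadline `D j = ρ · OPT j`, where `OPT j` is the optimal
makespan of the jobs up to `j`; these deadlines are nondecreasing. Cut time at the deadlines into
slots. A schedule meeting the deadlines is then a transportation plan: job `j` ships its volume
into the slots before `D j`, at most `r j` times the slot length into each slot, and a slot holds
at most its length. By the supply–demand theorem it suffices to check the cut condition, and for
nested deadlines this follows once the work `(v j - r j (D j - a)⁺)⁺` that the jobs must receive
before time `a` fits into `[0, a]`, for every `a ≥ 0`. With `V j = v 0 + ⋯ + v j`, the mandatory
work of job `j` is at most `v j · g (V j)` for the antitone density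
`g s = clamp (1 - ρ + a / s)`, so the total is a Riemann sum of `g`, bounded by `∫ g = a`; the
constant `e/(e-1)` is exactly the one for which `∫ g = a`.
-/

open MeasureTheory Set ENNReal

noncomputable section

/-- A feasible schedule for `n` jobs with volumes `v` and resource requirements `r`. -/
def IsFeasible (n : ℕ) (v r : Fin n → ℝ) (R : Fin n → ℝ → ℝ) : Prop :=
  (∀ j, Integrable (R j)) ∧
  (∀ j t, 0 ≤ R j t ∧ R j t ≤ 1) ∧
  (∀ j, ∀ t < (0:ℝ), R j t = 0) ∧
  (∀ t, ∑ j, R j t ≤ 1) ∧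
  (∀ j t, R j t ≤ r j) ∧
  (∀ j, v j ≤ ∫ t in Ioi (0:ℝ), R j t)

/-- The completion time of job `j` in schedule `R` (in `ℝ≥0∞`). -/
def compTime (n : ℕ) (R : Fin n → ℝ → ℝ) (j : Fin n) : ℝ≥0∞ :=
  ⨆ t ∈ {t : ℝ | 0 < R j t}, ENNReal.ofReal t

namespace Transport

variable {ι κ : Type*}

/-- Columns reachable from row `i₀` in the residual graph of `x`, indexed by the length of a
witnessing path: an edge `(i, k)` can be used forwards while `x i k < b i k` and backwards while
`0 < x i k`. -/
inductive Reach (b x : ι → κ → ℝ) (i₀ : ι) : ℕ → κ → Prop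
  | start {k : κ} : x i₀ k < b i₀ k → Reach b x i₀ 0 k
  | step {d : ℕ} {i : ι} {k' k : κ} :
      Reach b x i₀ d k' → 0 < x i k' → x i k < b i k → Reach b x i₀ (d + 1) k

theorem Reach.mono {b x y : ι → κ → ℝ} {i₀ : ι}
    (hlt : ∀ i k, x i k < b i k → y i k < b i k) (hpos : ∀ i k, 0 < x i k → 0 < y i k)
    {d : ℕ} {k : κ} (h : Reach b x i₀ d k) : Reach b y i₀ d k := by
  induction h with
  | start h => exact .start (hlt _ _ h)
  | step _ h₁ h₂ ih => exact .step ih (hpos _ _ h₁) (hlt _ _ h₂)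

def bump [DecidableEq ι] [DecidableEq κ] (x : ι → κ → ℝ) (i : ι) (k : κ) (ε : ℝ) :
    ι → κ → ℝ :=
  fun i' k' => x i' k' + if i' = i ∧ k' = k then ε else 0

section Bump

variable [DecidableEq ι] [DecidableEq κ]

theorem sum_bump_row [Fintype κ] (x : ι → κ → ℝ) (i : ι) (k : κ) (ε : ℝ) (i' : ι) :
    ∑ k', bump x i k ε i' k' = ∑ k', x i' k' + if i' = i then ε else 0 := by
  by_cases h : i' = i <;> simp [bump, Finset.sum_add_distrib, h]

theorem sum_bump_col [Fintype ι] (x : ι → κ → ℝ) (i : ι) (k : κ) (ε : ℝ) (k' : κ) :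
    ∑ i', bump x i k ε i' k' = ∑ i', x i' k' + if k' = k then ε else 0 := by
  by_cases h : k' = k <;> simp [bump, Finset.sum_add_distrib, h]

end Bump

variable [Fintype ι] [Fintype κ]

structure IsPlan (s : ι → ℝ) (c : κ → ℝ) (b x : ι → κ → ℝ) : Prop where
  nonneg : ∀ i k, 0 ≤ x i k
  le_bound : ∀ i k, x i k ≤ b i k
  col_le : ∀ k, ∑ i, x i k ≤ c k
  row_le : ∀ i, ∑ k, x i k ≤ s i

def total (x : ι → κ → ℝ) : ℝ := ∑ i, ∑ k, x i k

theorem continuous_total : Continuous (total : (ι → κ → ℝ) → ℝ) := by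
  unfold total; fun_prop

theorem isCompact_setOf_isPlan (s : ι → ℝ) (c : κ → ℝ) (b : ι → κ → ℝ) :
    IsCompact {x | IsPlan s c b x} := by
  have hset : {x | IsPlan s c b x} = {x | (∀ i k, 0 ≤ x i k) ∧ (∀ i k, x i k ≤ b i k) ∧
      (∀ k, ∑ i, x i k ≤ c k) ∧ ∀ i, ∑ k, x i k ≤ s i} := by
    ext x
    exact ⟨fun ⟨h₁, h₂, h₃, h₄⟩ => ⟨h₁, h₂, h₃, h₄⟩, fun ⟨h₁, h₂, h₃, h₄⟩ => ⟨h₁, h₂, h₃, h₄⟩⟩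
  refine isCompact_Icc.of_isClosed_subset ?_ (fun x hx => ⟨hx.nonneg, hx.le_bound⟩)
  rw [hset]
  simp only [ofPred_and, ofPred_forall]
  refine .inter (isClosed_iInter fun i => isClosed_iInter fun k => isClosed_le ?_ ?_) <|
    .inter (isClosed_iInter fun i => isClosed_iInter fun k => isClosed_le ?_ ?_) <|
    .inter (isClosed_iInter fun k => isClosed_le ?_ ?_) (isClosed_iInter fun i => isClosed_le ?_ ?_)
  all_goals fun_prop

theorem exists_pos_lt_of_pos {a b c : ℝ} (ha : 0 < a) (hb : 0 < b) (hc : 0 < c) :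
    ∃ ε > 0, ε < a ∧ ε < b ∧ ε < c :=
  ⟨min (min a b) c / 2, by positivity, by
    refine ⟨?_, ?_, ?_⟩ <;>
      linarith [min_le_left (min a b) c, min_le_right (min a b) c, min_le_left a b,
        min_le_right a b, half_lt_self (show 0 < min (min a b) c by positivity)]⟩

variable [DecidableEq ι] [DecidableEq κ] {s : ι → ℝ} {c : κ → ℝ} {b x : ι → κ → ℝ}

theorem total_bump (x : ι → κ → ℝ) (i : ι) (k : κ) (ε : ℝ) :
    total (bump x i k ε) = total x + ε := by
  simp [total, sum_bump_row, Finset.sum_add_distrib]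

theorem IsPlan.exists_total_lt_of_edge (hx : IsPlan s c b x) {i : ι} {k : κ}
    (hrow : ∑ k', x i k' < s i) (hedge : x i k < b i k) (hcol : ∑ i', x i' k < c k) :
    ∃ y, IsPlan s c b y ∧ total x < total y := by
  obtain ⟨ε, hε, hεb, hεc, hεs⟩ :=
    exists_pos_lt_of_pos (sub_pos.2 hedge) (sub_pos.2 hcol) (sub_pos.2 hrow)
  refine ⟨bump x i k ε, ⟨fun i' k' => ?_, fun i' k' => ?_, fun k' => ?_, fun i' => ?_⟩, ?_⟩
  · simp only [bump]; split_ifs <;> linarith [hx.nonneg i' k']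
  · simp only [bump]; split_ifs with h
    · obtain ⟨rfl, rfl⟩ := h; linarith
    · linarith [hx.le_bound i' k']
  · rw [sum_bump_col]; split_ifs with h
    · subst h; linarith
    · linarith [hx.col_le k']
  · rw [sum_bump_row]; split_ifs with h
    · subst h; linarith
    · linarith [hx.row_le i']
  · rw [total_bump]; linarith

/-- The witness moves a little flow of row `i` from column `k'` to column `k`. -/
theorem IsPlan.exists_reroute (hx : IsPlan s c b x) {i : ι} {k k' : κ} (hkk : k' ≠ k)
    (hpos : 0 < x i k') (hedge : x i k < b i k) (hcol : ∑ i', x i' k < c k) :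
    ∃ y, IsPlan s c b y ∧ total y = total x ∧ (∀ i', ∑ l, y i' l = ∑ l, x i' l) ∧
      (∀ i' l, x i' l < b i' l → y i' l < b i' l) ∧ (∀ i' l, 0 < x i' l → 0 < y i' l) ∧
      ∑ i', y i' k' < c k' := by
  obtain ⟨ε, hε, hεb, hεc, hεx⟩ := exists_pos_lt_of_pos (sub_pos.2 hedge) (sub_pos.2 hcol) hpos
  set y := bump (bump x i k ε) i k' (-ε)
  have hy : ∀ i' l, (i' = i ∧ l = k ∧ y i' l = x i' l + ε) ∨
      (i' = i ∧ l = k' ∧ y i' l = x i' l - ε) ∨ y i' l = x i' l := fun i' l => by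
    by_cases h₁ : i' = i ∧ l = k
    · obtain ⟨rfl, rfl⟩ := h₁; simp [y, bump, hkk.symm]
    by_cases h₂ : i' = i ∧ l = k'
    · obtain ⟨rfl, rfl⟩ := h₂; simp [y, bump, hkk, sub_eq_add_neg]
    · simp [y, bump, h₁, h₂]
  have hrows : ∀ i', ∑ l, y i' l = ∑ l, x i' l := fun i' => by
    simp only [y, sum_bump_row]; split_ifs <;> ring
  have hcols : ∀ l, ∑ i', y i' l =
      ∑ i', x i' l + (if l = k then ε else 0) + (if l = k' then -ε else 0) := fun l => by
    simp only [y, sum_bump_col]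
  refine ⟨y, ⟨fun i' l => ?_, fun i' l => ?_, fun l => ?_, fun i' => ?_⟩, ?_, hrows,
    fun i' l h => ?_, fun i' l h => ?_, ?_⟩
  · rcases hy i' l with ⟨rfl, rfl, h'⟩ | ⟨rfl, rfl, h'⟩ | h' <;> rw [h'] <;>
      linarith [hx.nonneg i' l]
  · rcases hy i' l with ⟨rfl, rfl, h'⟩ | ⟨rfl, rfl, h'⟩ | h' <;> rw [h'] <;>
      linarith [hx.le_bound i' l]
  · rw [hcols]; split_ifs with h₁ h₂ <;> (try subst h₁) <;> (try subst h₂) <;>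
      first | exact absurd rfl hkk | linarith [hx.col_le l]
  · rw [hrows]; exact hx.row_le i'
  · simp only [total, hrows]
  · rcases hy i' l with ⟨rfl, rfl, h'⟩ | ⟨rfl, rfl, h'⟩ | h' <;> rw [h'] <;> linarith
  · rcases hy i' l with ⟨rfl, rfl, h'⟩ | ⟨rfl, rfl, h'⟩ | h' <;> rw [h'] <;> linarith
  · rw [hcols, if_neg hkk, if_pos rfl]; linarith [hx.col_le k']

theorem IsPlan.exists_total_lt_of_reach {i₀ : ι} (hrow : ∑ k, x i₀ k < s i₀) {d : ℕ} {k : κ}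
    (hk : Reach b x i₀ d k) (hcol : ∑ i, x i k < c k) (hx : IsPlan s c b x) :
    ∃ y, IsPlan s c b y ∧ total x < total y := by
  induction d generalizing x k with
  | zero =>
    cases hk with
    | start hedge => exact hx.exists_total_lt_of_edge hrow hedge hcol
  | succ d ih =>
    cases hk with
    | @step _ i k' _ hk' hpos hedge =>
      by_cases hkk : k' = k
      · subst hkk; exact ih hrow hk' hcol hx
      obtain ⟨y, hy, htotal, hrows, hlt, hpos', hcol'⟩ := hx.exists_reroute hkk hpos hedge hcol
      obtain ⟨z, hz, hyz⟩ := ih (hrows i₀ ▸ hrow) (hk'.mono hlt hpos') hcol' hy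
      exact ⟨z, hz, htotal ▸ hyz⟩

/-- The supply–demand theorem, proved with augmenting paths from a plan of maximal total. -/
theorem exists_isPlan_of_forall_sum_le (hs : ∀ i, 0 ≤ s i) (hc : ∀ k, 0 ≤ c k)
    (hb : ∀ i k, 0 ≤ b i k)
    (hcut : ∀ S : Finset ι, ∑ i ∈ S, s i ≤ ∑ k, min (c k) (∑ i ∈ S, b i k)) :
    ∃ x, IsPlan s c b x ∧ ∀ i, ∑ k, x i k = s i := by
  have hzero : IsPlan s c b 0 := ⟨fun _ _ => le_rfl, hb, by simpa using hc, by simpa using hs⟩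
  obtain ⟨x, hx, hmax⟩ := (isCompact_setOf_isPlan s c b).exists_isMaxOn
    ⟨0, hzero⟩ continuous_total.continuousOn
  refine ⟨x, hx, fun i₀ => (hx.row_le i₀).eq_of_not_lt fun hrow => ?_⟩
  have hsat : ∀ d k, Reach b x i₀ d k → ∑ i, x i k = c k := fun d k hk =>
    (hx.col_le k).eq_of_not_lt fun hcol => by
      obtain ⟨y, hy, hlt⟩ := hx.exists_total_lt_of_reach hrow hk hcol
      exact (hmax hy).not_gt hlt
  classical
  -- the rows reachable from `i₀` violate the cut condition
  set A := {i | i = i₀ ∨ ∃ d k, Reach b x i₀ d k ∧ 0 < x i k}.toFinset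
  have hA : ∀ k, min (c k) (∑ i ∈ A, b i k) ≤ ∑ i ∈ A, x i k := by
    intro k
    by_cases hk : ∃ d, Reach b x i₀ d k
    · obtain ⟨d, hk⟩ := hk
      refine (min_le_left _ _).trans (hsat d k hk ▸ (Finset.sum_subset (Finset.subset_univ A)
        fun i _ hi => ?_).ge)
      by_contra hne
      exact hi (by simpa [A] using Or.inr ⟨d, k, hk, (hx.nonneg i k).lt_of_ne' hne⟩)
    · refine (min_le_right _ _).trans (Finset.sum_le_sum fun i hi => ?_)
      by_contra hlt
      push Not at hk hlt
      obtain rfl | ⟨d, k', hk', hpos⟩ : i = i₀ ∨ ∃ d k', Reach b x i₀ d k' ∧ 0 < x i k' := by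
        simpa [A] using hi
      · exact hk 0 (.start hlt)
      · exact hk (d + 1) (.step hk' hpos hlt)
  refine (Finset.sum_lt_sum (s := A) (fun i _ => hx.row_le i) ⟨i₀, by simp [A], hrow⟩).not_ge ?_
  calc ∑ i ∈ A, s i ≤ ∑ k, min (c k) (∑ i ∈ A, b i k) := hcut A
    _ ≤ ∑ k, ∑ i ∈ A, x i k := Finset.sum_le_sum fun k _ => hA k
    _ = ∑ i ∈ A, ∑ k, x i k := Finset.sum_comm

end Transport

theorem Antitone.sub_mul_le_integral {g : ℝ → ℝ} (hg : Antitone g) {x y : ℝ} (hxy : x ≤ y) :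
    (y - x) * g y ≤ ∫ s in x..y, g s := by
  rw [← smul_eq_mul, ← intervalIntegral.integral_const]
  exact intervalIntegral.integral_mono_on hxy intervalIntegrable_const hg.intervalIntegrable
    fun s hs => hg hs.2

local notation "ρ" => Real.exp 1 / (Real.exp 1 - 1)

namespace Scheduling

variable {n : ℕ}

def prefixSum (f : Fin n → ℝ) (i : ℕ) : ℝ :=
  ∑ k ∈ Finset.univ.filter (fun k : Fin n => (k : ℕ) < i), f k

theorem prefixSum_zero (f : Fin n → ℝ) : prefixSum f 0 = 0 := by simp [prefixSum]

theorem prefixSum_succ (f : Fin n → ℝ) (j : Fin n) :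
    prefixSum f (j + 1) = prefixSum f j + f j := by
  simp only [prefixSum, Finset.sum_filter]
  rw [← Fintype.sum_ite_eq' j f, ← Finset.sum_add_distrib]
  refine Finset.sum_congr rfl fun k _ => ?_
  simp only [← Fin.val_inj]
  split_ifs <;> first | (exfalso; omega) | ring

theorem prefixSum_succ_eq_sum_Iic (f : Fin n → ℝ) (j : Fin n) :
    prefixSum f (j + 1) = ∑ i ∈ Finset.Iic j, f i := by
  unfold prefixSum
  congr 1
  ext i
  simp only [Finset.mem_filter, Finset.mem_univ, true_and, Finset.mem_Iic, Fin.le_def,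
    Nat.lt_succ_iff]

theorem prefixSum_nonneg {f : Fin n → ℝ} (hf : ∀ k, 0 ≤ f k) (i : ℕ) : 0 ≤ prefixSum f i :=
  Finset.sum_nonneg fun k _ => hf k

theorem monotone_prefixSum {f : Fin n → ℝ} (hf : ∀ k, 0 ≤ f k) : Monotone (prefixSum f) :=
  fun _ _ h => Finset.sum_le_sum_of_subset_of_nonneg
    (Finset.monotone_filter_right _ fun _ _ hk => hk.trans_le h) fun k _ _ => hf k

theorem max_prefixSum_sub_prefixSum {f : Fin n → ℝ} (hf : ∀ k, 0 ≤ f k) (i : ℕ) (j : Fin n) :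
    max (prefixSum f (j + 1) - prefixSum f i) 0 =
      ∑ k ∈ Finset.univ.filter (fun k : Fin n => i ≤ (k : ℕ) ∧ k ≤ j), f k := by
  rcases le_or_gt i j with h | h
  · rw [max_eq_left (sub_nonneg.2 (monotone_prefixSum hf (by omega))), prefixSum, prefixSum,
      Finset.sum_filter, Finset.sum_filter, Finset.sum_filter, ← Finset.sum_sub_distrib]
    refine Finset.sum_congr rfl fun k _ => ?_
    simp only [Fin.le_def]
    split_ifs <;> first | (exfalso; omega) | ring
  · rw [max_eq_right (sub_nonpos.2 (monotone_prefixSum hf (by omega))), eq_comm]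
    exact Finset.sum_eq_zero fun k hk => by rw [Finset.mem_filter, Fin.le_def] at hk; omega

def slotLength (D : Fin n → ℝ) (k : Fin n) : ℝ :=
  D k - if (k : ℕ) = 0 then 0 else D ⟨k - 1, (Nat.sub_le _ _).trans_lt k.isLt⟩

theorem slotLength_nonneg {D : Fin n → ℝ} (hD : Monotone D) (hD₀ : ∀ j, 0 ≤ D j) (k : Fin n) :
    0 ≤ slotLength D k := by
  unfold slotLength
  split_ifs
  · simpa using hD₀ k
  · exact sub_nonneg.2 (hD (Fin.mk_le_mk.2 (Nat.sub_le _ _)))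

theorem prefixSum_slotLength (D : Fin n → ℝ) (j : Fin n) :
    prefixSum (slotLength D) (j + 1) = D j := by
  obtain ⟨j, hj⟩ := j
  induction j with
  | zero => simp [prefixSum_succ (slotLength D) ⟨0, hj⟩, prefixSum_zero, slotLength]
  | succ j ih =>
    rw [prefixSum_succ (slotLength D) ⟨j + 1, hj⟩, ih (by omega)]
    simp [slotLength]

theorem exp_one_sub_one_pos : 0 < Real.exp 1 - 1 := sub_pos.2 (Real.one_lt_exp_iff.2 one_pos)

theorem ratio_sub_one : ρ - 1 = (Real.exp 1 - 1)⁻¹ := by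
  field_simp [exp_one_sub_one_pos.ne']; ring

theorem one_lt_ratio : 1 < ρ := by
  have := inv_pos.2 exp_one_sub_one_pos; linarith [ratio_sub_one]

/-- The least work a job of volume `v` and resource requirement `r` must receive before time `a`
in order to be finished by time `D`. -/
def mandatoryWork (v r D a : ℝ) : ℝ := max (v - r * max (D - a) 0) 0

/-- `v * workDensity a V` bounds the mandatory work before time `a` of a job of volume `v` that
closes a prefix of total volume `V`, while the density has total mass `a`. -/
def workDensity (a s : ℝ) : ℝ := if ρ * s ≤ a then 1 else max 0 (1 - ρ + a / s)

theorem workDensity_nonneg (a s : ℝ) : 0 ≤ workDensity a s := by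
  unfold workDensity; split_ifs <;> simp

theorem antitone_workDensity {a : ℝ} (ha : 0 ≤ a) : Antitone (workDensity a) := by
  intro s s' hss'
  unfold workDensity
  have hρ := one_lt_ratio
  split_ifs with h h' h'
  · exact le_rfl
  · exact absurd (le_trans (by nlinarith) h) h'
  · refine max_le zero_le_one ?_
    have hs' : 0 < s' := by nlinarith
    linarith [(div_le_iff₀ hs').2 (by linarith : a ≤ ρ * s')]
  · have hs : 0 < s := by nlinarith
    exact max_le_max le_rfl (by linarith [div_le_div_of_nonneg_left ha hs hss'])

theorem workDensity_eq_zero {a s : ℝ} (ha : 0 ≤ a) (hs : (Real.exp 1 - 1) * a < s) :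
    workDensity a s = 0 := by
  have hs₀ : 0 < s := lt_of_le_of_lt (mul_nonneg exp_one_sub_one_pos.le ha) hs
  have h : a < (ρ - 1) * s := by
    rw [ratio_sub_one, inv_mul_eq_div, lt_div_iff₀ exp_one_sub_one_pos]; linarith
  unfold workDensity
  split_ifs with h'
  · linarith [sub_mul ρ 1 s]
  · exact max_eq_left (by linarith [(div_lt_iff₀ hs₀).2 h])

theorem workDensity_eq_of_mem_Icc {a s : ℝ} (ha : 0 < a)
    (hs : s ∈ Icc (a / ρ) ((Real.exp 1 - 1) * a)) : workDensity a s = 1 - ρ + a * s⁻¹ := by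
  have hρ : 0 < ρ := zero_lt_one.trans one_lt_ratio
  have hs₀ : 0 < s := (div_pos ha hρ).trans_le hs.1
  have hρs : a ≤ ρ * s := (div_le_iff₀' hρ).1 hs.1
  unfold workDensity
  split_ifs with h
  · rw [le_antisymm hρs h, mul_assoc, mul_inv_cancel₀ hs₀.ne']; ring
  · have : (Real.exp 1 - 1)⁻¹ ≤ a / s := by
      rw [inv_eq_one_div, div_le_div_iff₀ exp_one_sub_one_pos hs₀]; linarith [hs.2]
    rw [max_eq_right (by linarith [ratio_sub_one]), ← div_eq_mul_inv]

theorem integral_workDensity {a : ℝ} (ha : 0 ≤ a) :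
    ∫ s in 0..(Real.exp 1 - 1) * a, workDensity a s = a := by
  rcases ha.eq_or_lt with rfl | ha
  · simp
  have he := exp_one_sub_one_pos
  have hρ : 0 < ρ := zero_lt_one.trans one_lt_ratio
  set c₁ := a / ρ
  set c₂ := (Real.exp 1 - 1) * a
  have hc₁ : 0 < c₁ := div_pos ha hρ
  have hc₂ : c₂ = Real.exp 1 * c₁ := by simp only [c₁, c₂]; field_simp
  have hc₁₂ : c₁ ≤ c₂ := by rw [hc₂]; nlinarith [Real.add_one_le_exp 1]
  have hint : ∀ x y, IntervalIntegrable (workDensity a) volume x y := fun x y =>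
    (antitone_workDensity ha.le).intervalIntegrable
  have h₁ : ∫ s in 0..c₁, workDensity a s = c₁ := by
    rw [intervalIntegral.integral_congr (g := fun _ => 1), intervalIntegral.integral_const]
    · simp
    intro s hs
    rw [uIcc_of_le hc₁.le] at hs
    exact if_pos ((le_div_iff₀' hρ).1 hs.2)
  have h₂ : ∫ s in c₁..c₂, workDensity a s = (c₂ - c₁) * (1 - ρ) + a * Real.log (c₂ / c₁) := by
    rw [intervalIntegral.integral_congr (g := fun s => (1 - ρ) + a * s⁻¹),
      intervalIntegral.integral_add intervalIntegrable_const, intervalIntegral.integral_const,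
      intervalIntegral.integral_const_mul, integral_inv_of_pos hc₁ (hc₁.trans_le hc₁₂),
      smul_eq_mul]
    · refine (intervalIntegral.intervalIntegrable_inv (fun x hx => ?_) continuousOn_id).const_mul a
      rw [uIcc_of_le hc₁₂] at hx
      exact (hc₁.trans_le hx.1).ne'
    · intro s hs
      rw [uIcc_of_le hc₁₂] at hs
      exact workDensity_eq_of_mem_Icc ha hs
  have h1ρ : 1 - ρ = -(Real.exp 1 - 1)⁻¹ := by linarith [ratio_sub_one]
  rw [← intervalIntegral.integral_add_adjacent_intervals (hint 0 c₁) (hint c₁ c₂), h₁, h₂, hc₂,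
    mul_div_assoc, div_self hc₁.ne', mul_one, Real.log_exp, h1ρ]
  field_simp; ring

theorem integral_workDensity_le {a : ℝ} (ha : 0 ≤ a) (V : ℝ) :
    ∫ s in 0..V, workDensity a s ≤ a := by
  set c := (Real.exp 1 - 1) * a
  have hint : ∀ x y, IntervalIntegrable (workDensity a) volume x y := fun x y =>
    (antitone_workDensity ha).intervalIntegrable
  rw [← intervalIntegral.integral_add_adjacent_intervals (hint 0 c) (hint c V),
    integral_workDensity ha]
  suffices ∫ s in c..V, workDensity a s ≤ 0 by linarith
  rcases le_total c V with h | h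
  · rw [intervalIntegral.integral_of_le h]
    exact setIntegral_nonpos measurableSet_Ioc fun s hs => (workDensity_eq_zero ha hs.1).le
  · rw [intervalIntegral.integral_symm]
    exact neg_nonpos.2 (intervalIntegral.integral_nonneg h fun s _ => workDensity_nonneg a s)

theorem mandatoryWork_le_mul_workDensity {v r D a V : ℝ} (hv : 0 ≤ v) (hr : 0 ≤ r)
    (hvD : ρ * v ≤ r * D) (hV : 0 < V) (hVD : ρ * V ≤ D) (ha : 0 ≤ a) :
    mandatoryWork v r D a ≤ v * workDensity a V := by
  unfold mandatoryWork workDensity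
  split_ifs with h
  · exact max_le (by nlinarith [le_max_right (D - a) 0]) (by linarith)
  have haD : a ≤ D := by linarith
  have hD : 0 < D := lt_of_le_of_lt' hVD (mul_pos (zero_lt_one.trans one_lt_ratio) hV)
  rw [max_eq_left (sub_nonneg.2 haD)]
  refine max_le ?_ (mul_nonneg hv (le_max_left _ _))
  refine le_trans ?_ (mul_le_mul_of_nonneg_left (le_max_right _ _) hv)
  have hgap : v * (1 - ρ + a / V) - (v - r * (D - a)) =
      (V * (r * D - ρ * v) * (D - a) + a * v * (D - ρ * V)) / (D * V) := by
    field_simp; ring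
  have : 0 ≤ V * (r * D - ρ * v) * (D - a) + a * v * (D - ρ * V) := by
    have := sub_nonneg.2 hvD; have := sub_nonneg.2 hVD; have := sub_nonneg.2 haD; positivity
  linarith [div_nonneg this (mul_pos hD hV).le]

theorem sum_mandatoryWork_le {v r D : Fin n → ℝ} (hv : ∀ j, 0 < v j) (hr : ∀ j, 0 ≤ r j)
    (hvD : ∀ j, ρ * v j ≤ r j * D j) (hVD : ∀ j : Fin n, ρ * prefixSum v (j + 1) ≤ D j)
    {a : ℝ} (ha : 0 ≤ a) : ∑ j, mandatoryWork (v j) (r j) (D j) a ≤ a := by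
  have hv₀ : ∀ j, 0 ≤ v j := fun j => (hv j).le
  have hV : ∀ j : Fin n, 0 < prefixSum v (j + 1) := fun j => by
    rw [prefixSum_succ]; linarith [prefixSum_nonneg hv₀ j, hv j]
  calc ∑ j, mandatoryWork (v j) (r j) (D j) a
      ≤ ∑ j : Fin n, v j * workDensity a (prefixSum v (j + 1)) := Finset.sum_le_sum fun j _ =>
        mandatoryWork_le_mul_workDensity (hv₀ j) (hr j) (hvD j) (hV j) (hVD j) ha
    _ ≤ ∑ j : Fin n, ∫ s in prefixSum v j..prefixSum v (j + 1), workDensity a s :=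
        Finset.sum_le_sum fun j _ => by
          simpa [prefixSum_succ] using (antitone_workDensity ha).sub_mul_le_integral
            (monotone_prefixSum hv₀ (Nat.le_succ j))
    _ = ∫ s in prefixSum v 0..prefixSum v n, workDensity a s := by
        rw [Fin.sum_univ_eq_sum_range (fun i => ∫ s in prefixSum v i..prefixSum v (i + 1),
          workDensity a s), intervalIntegral.sum_integral_adjacent_intervals fun k _ =>
          (antitone_workDensity ha).intervalIntegrable]
    _ ≤ a := by rw [prefixSum_zero]; exact integral_workDensity_le ha _

theorem exists_forall_val_lt_iff {P : Fin n → Prop} (hP : ∀ k k', k ≤ k' → P k' → P k) :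
    ∃ K : ℕ, ∀ k : Fin n, (k : ℕ) < K ↔ P k := by
  classical
  by_cases h : ∀ k, P k
  · exact ⟨n, fun k => iff_of_true k.isLt (h k)⟩
  push Not at h
  obtain ⟨k₁, hk₁⟩ := h
  have hne : (Finset.univ.filter fun k => ¬ P k).Nonempty := ⟨k₁, by simpa using hk₁⟩
  set k₀ := (Finset.univ.filter fun k => ¬ P k).min' hne
  have hk₀ : ¬ P k₀ := (Finset.mem_filter.1 (Finset.min'_mem _ hne)).2
  refine ⟨k₀, fun k => ⟨fun hk => ?_, fun hk => ?_⟩⟩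
  · by_contra hPk
    exact (Finset.min'_le _ k (by simpa using hPk)).not_gt (Fin.lt_def.2 hk)
  · by_contra hle
    exact hk₀ (hP k₀ k (Fin.le_def.2 (not_lt.1 hle)) hk)

theorem sum_le_sum_min_of_sum_mandatoryWork_le {v r L : Fin n → ℝ} (hr : ∀ j, 0 ≤ r j)
    (hL : ∀ k, 0 ≤ L k)
    (hmand : ∀ a, 0 ≤ a → ∑ j, mandatoryWork (v j) (r j) (prefixSum L (j + 1)) a ≤ a)
    (S : Finset (Fin n)) :
    ∑ j ∈ S, v j ≤ ∑ k, min (L k) (∑ j ∈ S, if k ≤ j then r j * L k else 0) := by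
  set RS : Fin n → ℝ := fun k => ∑ j ∈ S.filter (k ≤ ·), r j
  have hRS : ∀ k, (∑ j ∈ S, if k ≤ j then r j * L k else 0) = L k * RS k := fun k => by
    simp only [RS]; rw [Finset.sum_filter, Finset.mul_sum]
    exact Finset.sum_congr rfl fun j _ => by split_ifs <;> ring
  -- the cut is the slot length on the slots before `K` and the share of `S` on the others
  obtain ⟨K, hK⟩ := exists_forall_val_lt_iff (P := fun k => 1 ≤ RS k) fun k k' hkk' h =>
    h.trans (Finset.sum_le_sum_of_subset_of_nonneg
      (Finset.monotone_filter_right _ fun j _ hj => hkk'.trans hj) fun j _ _ => hr j)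
  set a := prefixSum L K
  have hslot : ∀ k : Fin n, (if (k : ℕ) < K then L k else 0) +
      ∑ j ∈ S, (if K ≤ (k : ℕ) ∧ k ≤ j then r j * L k else 0) ≤
      min (L k) (∑ j ∈ S, if k ≤ j then r j * L k else 0) := by
    intro k
    rw [hRS]
    by_cases hk : (k : ℕ) < K
    · rw [if_pos hk, Finset.sum_eq_zero fun j _ => if_neg fun h => by omega, add_zero]
      exact le_min le_rfl (le_mul_of_one_le_right (hL k) ((hK k).1 hk))
    · simp only [if_neg hk, not_lt.1 hk, true_and, zero_add, hRS]
      exact le_min (mul_le_of_le_one_right (hL k) (not_le.1 ((hK k).not.1 hk)).le) le_rfl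
  calc ∑ j ∈ S, v j
      ≤ ∑ j ∈ S, (mandatoryWork (v j) (r j) (prefixSum L (j + 1)) a +
          r j * max (prefixSum L (j + 1) - a) 0) := Finset.sum_le_sum fun j _ => by
        unfold mandatoryWork; linarith [le_max_left (v j - r j * max (prefixSum L (j + 1) - a) 0) 0]
    _ ≤ a + ∑ j ∈ S, r j * max (prefixSum L (j + 1) - a) 0 := by
        rw [Finset.sum_add_distrib]
        gcongr
        exact (Finset.sum_le_sum_of_subset_of_nonneg (Finset.subset_univ S)
          fun _ _ _ => le_max_right _ _).trans (hmand a (prefixSum_nonneg hL K))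
    _ = ∑ k : Fin n, ((if (k : ℕ) < K then L k else 0) +
          ∑ j ∈ S, if K ≤ (k : ℕ) ∧ k ≤ j then r j * L k else 0) := by
        rw [Finset.sum_add_distrib, ← Finset.sum_filter, Finset.sum_comm]
        congr 1
        refine Finset.sum_congr rfl fun j _ => ?_
        rw [max_prefixSum_sub_prefixSum hL, Finset.mul_sum, Finset.sum_filter]
    _ ≤ _ := Finset.sum_le_sum fun k _ => hslot k

def slotSchedule (L : Fin n → ℝ) (y : Fin n → Fin n → ℝ) (j : Fin n) (t : ℝ) : ℝ :=
  ∑ k : Fin n, (Ioc (prefixSum L k) (prefixSum L (k + 1))).indicator (fun _ => y j k) t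

section Slots

variable {L : Fin n → ℝ}

theorem eq_of_mem_slot (hL : ∀ k, 0 ≤ L k) {t : ℝ} {k k' : Fin n}
    (hk : t ∈ Ioc (prefixSum L k) (prefixSum L (k + 1)))
    (hk' : t ∈ Ioc (prefixSum L k') (prefixSum L (k' + 1))) : k = k' := by
  have key : ∀ {k k' : Fin n}, k < k' → t ∈ Ioc (prefixSum L k) (prefixSum L (k + 1)) →
      t ∉ Ioc (prefixSum L k') (prefixSum L (k' + 1)) := fun hlt hk hk' =>
    (hk.2.trans (monotone_prefixSum hL (Nat.succ_le_of_lt hlt))).not_gt hk'.1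
  rcases lt_trichotomy k k' with h | h | h
  · exact absurd hk' (key h hk)
  · exact h
  · exact absurd hk (key h hk')

theorem slotSchedule_cases (hL : ∀ k, 0 ≤ L k) (t : ℝ) :
    (∀ y j, slotSchedule L y j t = 0) ∨
      ∃ k : Fin n, 0 < t ∧ t ≤ prefixSum L (k + 1) ∧ ∀ y j, slotSchedule L y j t = y j k := by
  by_cases h : ∃ k : Fin n, t ∈ Ioc (prefixSum L k) (prefixSum L (k + 1))
  · obtain ⟨k, hk⟩ := h
    refine Or.inr ⟨k, (prefixSum_nonneg hL k).trans_lt hk.1, hk.2, fun y j => ?_⟩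
    rw [slotSchedule, Finset.sum_eq_single k (fun k' _ hne => indicator_of_notMem
      (fun hk' => hne (eq_of_mem_slot hL hk' hk)) _) (by simp), indicator_of_mem hk]
  · push Not at h
    exact Or.inl fun y j => Finset.sum_eq_zero fun k _ => indicator_of_notMem (h k) _

theorem integrable_slotSchedule (L : Fin n → ℝ) (y : Fin n → Fin n → ℝ) (j : Fin n) :
    Integrable (slotSchedule L y j) :=
  integrable_finsetSum _ fun _ _ =>
    (integrableOn_const measure_Ioc_lt_top.ne).integrable_indicator measurableSet_Ioc

theorem setIntegral_slotSchedule (hL : ∀ k, 0 ≤ L k) (y : Fin n → Fin n → ℝ) (j : Fin n) :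
    ∫ t in Ioi 0, slotSchedule L y j t = ∑ k, y j k * L k := by
  unfold slotSchedule
  rw [integral_finsetSum _ fun _ _ =>
    ((integrableOn_const measure_Ioc_lt_top.ne).integrable_indicator measurableSet_Ioc).restrict]
  refine Finset.sum_congr rfl fun k _ => ?_
  rw [setIntegral_indicator measurableSet_Ioc, inter_eq_right.2
    (Ioc_subset_Ioi_self.trans (Ioi_subset_Ioi (prefixSum_nonneg hL k))), setIntegral_const,
    Real.volume_real_Ioc_of_le (monotone_prefixSum hL (Nat.le_succ k)), prefixSum_succ,
    smul_eq_mul]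
  ring

theorem isFeasible_slotSchedule {v r : Fin n → ℝ} {y : Fin n → Fin n → ℝ} (hL : ∀ k, 0 ≤ L k)
    (hr : ∀ j, r j ≤ 1) (hy₀ : ∀ j k, 0 ≤ y j k) (hyr : ∀ j k, y j k ≤ r j)
    (hcol : ∀ k, ∑ j, y j k ≤ 1) (hvol : ∀ j, v j ≤ ∑ k, y j k * L k) :
    IsFeasible n v r (slotSchedule L y) := by
  refine ⟨integrable_slotSchedule L y, fun j t => ?_, fun j t ht => ?_, fun t => ?_, fun j t => ?_,
    fun j => (setIntegral_slotSchedule hL y j).symm ▸ hvol j⟩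
  · rcases slotSchedule_cases hL t with h | ⟨k, -, -, h⟩
    · simp [h]
    · rw [h]; exact ⟨hy₀ j k, (hyr j k).trans (hr j)⟩
  · rcases slotSchedule_cases hL t with h | ⟨k, ht₀, -, -⟩
    · exact h y j
    · linarith
  · rcases slotSchedule_cases hL t with h | ⟨k, -, -, h⟩
    · simp [h]
    · simpa only [h] using hcol k
  · rcases slotSchedule_cases hL t with h | ⟨k, -, -, h⟩
    · rw [h]; exact (hy₀ j j).trans (hyr j j)
    · rw [h]; exact hyr j k

theorem compTime_slotSchedule_le (hL : ∀ k, 0 ≤ L k) {y : Fin n → Fin n → ℝ}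
    (hy : ∀ j k, j < k → y j k = 0) (j : Fin n) :
    compTime n (slotSchedule L y) j ≤ ENNReal.ofReal (prefixSum L (j + 1)) := by
  refine iSup₂_le fun t (ht : 0 < slotSchedule L y j t) => ENNReal.ofReal_le_ofReal ?_
  rcases slotSchedule_cases hL t with h | ⟨k, -, htk, h⟩
  · exact absurd (h y j) ht.ne'
  · rw [h] at ht
    have hkj : k ≤ j := not_lt.1 fun hjk => ht.ne' (hy j k hjk)
    exact htk.trans (monotone_prefixSum hL (Nat.succ_le_succ (Fin.le_def.1 hkj)))

end Slots

theorem exists_isFeasible_of_sum_mandatoryWork_le {v r D : Fin n → ℝ} (hv : ∀ j, 0 ≤ v j)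
    (hr : ∀ j, 0 < r j ∧ r j ≤ 1) (hD : Monotone D) (hD₀ : ∀ j, 0 ≤ D j)
    (hmand : ∀ a, 0 ≤ a → ∑ j, mandatoryWork (v j) (r j) (D j) a ≤ a) :
    ∃ R, IsFeasible n v r R ∧ ∀ j, compTime n R j ≤ ENNReal.ofReal (D j) := by
  set L := slotLength D
  have hL : ∀ k, 0 ≤ L k := slotLength_nonneg hD hD₀
  have hLD : ∀ j : Fin n, prefixSum L (j + 1) = D j := prefixSum_slotLength D
  have hb : ∀ j k, (if k ≤ j then r j * L k else 0) ≤ r j * L k := fun j k => by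
    split_ifs
    exacts [le_rfl, mul_nonneg (hr j).1.le (hL k)]
  obtain ⟨x, hx, hrow⟩ := Transport.exists_isPlan_of_forall_sum_le hv hL
    (b := fun j k => if k ≤ j then r j * L k else 0)
    (fun j k => by split_ifs; exacts [mul_nonneg (hr j).1.le (hL k), le_rfl])
    (sum_le_sum_min_of_sum_mandatoryWork_le (fun j => (hr j).1.le) hL (by simpa only [hLD]))
  -- an empty slot carries no flow, so the junk value `x / 0 = 0` of the rate is harmless
  have hxL : ∀ j k, x j k / L k * L k = x j k := fun j k => div_mul_cancel_of_imp fun h =>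
    le_antisymm ((hx.le_bound j k).trans ((hb j k).trans_eq (by rw [h, mul_zero]))) (hx.nonneg j k)
  refine ⟨slotSchedule L fun j k => x j k / L k, isFeasible_slotSchedule hL (fun j => (hr j).2)
    (fun j k => div_nonneg (hx.nonneg j k) (hL k))
    (fun j k => div_le_of_le_mul₀ (hL k) (hr j).1.le ((hx.le_bound j k).trans (hb j k)))
    (fun k => by rw [← Finset.sum_div]; exact div_le_one_of_le₀ (hx.col_le k) (hL k))
    (fun j => by simp only [hxL, hrow, le_rfl]), fun j => ?_⟩
  refine (compTime_slotSchedule_le hL (fun j k hjk => ?_) j).trans_eq (by rw [hLD])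
  rw [le_antisymm ((hx.le_bound j k).trans_eq (if_neg hjk.not_ge)) (hx.nonneg j k), zero_div]

/-- The optimal makespan of the jobs `0, …, j`. -/
def prefixOpt (v r : Fin n → ℝ) (j : Fin n) : ℝ :=
  max (∑ i ∈ Finset.Iic j, v i)
    ((Finset.Iic j).sup' ⟨j, Finset.mem_Iic.mpr le_rfl⟩ fun i => v i / r i)

theorem monotone_prefixOpt {v : Fin n → ℝ} (hv : ∀ j, 0 ≤ v j) (r : Fin n → ℝ) :
    Monotone (prefixOpt v r) := fun _ _ h =>
  max_le_max (Finset.sum_le_sum_of_subset_of_nonneg (Finset.Iic_subset_Iic.2 h) fun i _ _ => hv i)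
    (Finset.sup'_mono _ (Finset.Iic_subset_Iic.2 h) _)

theorem div_le_prefixOpt (v r : Fin n → ℝ) (j : Fin n) : v j / r j ≤ prefixOpt v r j :=
  (Finset.le_sup' (fun i => v i / r i) (Finset.mem_Iic.2 le_rfl)).trans (le_max_right _ _)

theorem prefixSum_le_prefixOpt (v r : Fin n → ℝ) (j : Fin n) :
    prefixSum v (j + 1) ≤ prefixOpt v r j :=
  (prefixSum_succ_eq_sum_Iic v j).trans_le (le_max_left _ _)

end Scheduling

theorem stmt7_general (n : ℕ) (v r : Fin n → ℝ)
    (hv : ∀ j, 0 < v j) (hr : ∀ j, 0 < r j ∧ r j ≤ 1) :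
    ∃ R : Fin n → ℝ → ℝ, IsFeasible n v r R ∧
      ∀ j : Fin n,
        compTime n R j ≤
          ENNReal.ofReal (Real.exp 1 / (Real.exp 1 - 1) *
            max (∑ i ∈ Finset.Iic j, v i)
              ((Finset.Iic j).sup' ⟨j, Finset.mem_Iic.mpr le_rfl⟩ fun i => v i / r i)) := by
  have hρ : 0 ≤ ρ := (zero_lt_one.trans Scheduling.one_lt_ratio).le
  have hv₀ : ∀ j, 0 ≤ v j := fun j => (hv j).le
  set OPT := Scheduling.prefixOpt v r
  have hvr : ∀ j, v j ≤ r j * OPT j := fun j =>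
    (div_le_iff₀' (hr j).1).1 (Scheduling.div_le_prefixOpt v r j)
  have hOPT₀ : ∀ j, 0 ≤ OPT j := fun j =>
    (div_pos (hv j) (hr j).1).le.trans (Scheduling.div_le_prefixOpt v r j)
  refine Scheduling.exists_isFeasible_of_sum_mandatoryWork_le (D := fun j => ρ * OPT j) hv₀ hr
    (fun _ _ h => mul_le_mul_of_nonneg_left (Scheduling.monotone_prefixOpt hv₀ r h) hρ)
    (fun j => mul_nonneg hρ (hOPT₀ j)) fun a ha => ?_
  exact Scheduling.sum_mandatoryWork_le hv (fun j => (hr j).1.le)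
    (fun j => by rw [mul_left_comm]; exact mul_le_mul_of_nonneg_left (hvr j) hρ)
    (fun j => mul_le_mul_of_nonneg_left (Scheduling.prefixSum_le_prefixOpt v r j) hρ) ha

/-- Water-filling is `e/(e-1)`-competitive for online makespan minimization: for every
job sequence there is a feasible schedule in which every job `j` completes within
`e/(e-1)` times the optimal makespan of the prefix `{1,…,j}`. -/
theorem stmt7 (n : ℕ) (hn : 1 ≤ n) (v r : Fin n → ℝ)
    (hv : ∀ j, 0 < v j) (hr : ∀ j, 0 < r j ∧ r j ≤ 1) :
    ∃ R : Fin n → ℝ → ℝ, IsFeasible n v r R ∧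
      ∀ j : Fin n,
        compTime n R j ≤
          ENNReal.ofReal (Real.exp 1 / (Real.exp 1 - 1) *
            max (∑ i ∈ Finset.Iic j, v i)
              ((Finset.Iic j).sup' ⟨j, Finset.mem_Iic.mpr le_rfl⟩ fun i => v i / r i)) :=
  stmt7_general n v r hv hr
end
end

section
/- For every c < e/(e−1) there exists n ≥ 1 such that for the job set J = {1,…,n} with volumes v_j = 1/n and resource requirements r_j = 1/j for j = 1,…,n, there is no feasible schedule R satisfying C_j(R) ≤ c·j/n for all j ∈ {1,…,n}. (Since the optimal makespan of the prefix {1,…,j} of this instance equals j/n, this shows no deterministic list-scheduling algorithm for makespan minimization has competitive ratio below e/(e−1).) -/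
/-
By time `T = c - 1` the machine has processed total volume at most `T`. Job `j` is due at
`c j / n` and after `T` it can run only at rate `1 / j`, i.e. for time `(c j / n - T)⁺`, so at
least `1 / n - (c j / n - T)⁺ / j` of it must be done before `T`. Summing over `j`, these
amounts add up to the harmonic-type sum `≈ (c - 1) log (c / (c - 1))`, which exceeds `c - 1`
for large `n` precisely when `c / (c - 1) > e`, i.e. `c < e / (e - 1)`. Deadlines only get
harder to meet as `c` decreases, so we may assume `c > 1`, making `T` positive.
-/

open MeasureTheory Set ENNReal

noncomputable section

open Filter

namespace IsFeasible

variable {n : ℕ} {v r : Fin n → ℝ} {R : Fin n → ℝ → ℝ}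

theorem eq_zero_of_compTime_le (hR : IsFeasible n v r R) {j : Fin n} {d t : ℝ} (hd : 0 ≤ d)
    (hC : compTime n R j ≤ ENNReal.ofReal d) (ht : d < t) : R j t = 0 := by
  obtain ⟨-, hbounds, -⟩ := hR
  refine ((hbounds j t).1.eq_or_lt').resolve_right fun hpos => ht.not_ge ?_
  have hle : ENNReal.ofReal t ≤ compTime n R j :=
    le_iSup₂ (f := fun (s : ℝ) (_ : s ∈ {s : ℝ | 0 < R j s}) => ENNReal.ofReal s) t hpos
  exact (ENNReal.ofReal_le_ofReal_iff hd).1 (hle.trans hC)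

theorem sub_le_setIntegral_Ioc (hR : IsFeasible n v r R) {j : Fin n} {d T : ℝ} (hT : 0 ≤ T)
    (hC : compTime n R j ≤ ENNReal.ofReal d) :
    v j - (max d T - T) * r j ≤ ∫ t in Ioc 0 T, R j t := by
  set D := max d T
  have hTD : T ≤ D := le_max_right d T
  have hvanish (t : ℝ) (ht : D < t) : R j t = 0 :=
    hR.eq_zero_of_compTime_le (hT.trans hTD)
      (hC.trans (ENNReal.ofReal_le_ofReal (le_max_left d T))) ht
  obtain ⟨hintegrable, -, -, -, hrequirement, hvolume⟩ := hR
  have hint {s : Set ℝ} : IntegrableOn (R j) s := (hintegrable j).integrableOn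
  have hsupport : ∫ t in Ioi 0, R j t = ∫ t in Ioc 0 D, R j t :=
    setIntegral_eq_of_subset_of_forall_sdiff_eq_zero measurableSet_Ioi Ioc_subset_Ioi_self
      fun t ⟨ht0, htD⟩ => hvanish t (not_le.1 fun h => htD ⟨ht0, h⟩)
  have hsplit : ∫ t in Ioc 0 D, R j t = (∫ t in Ioc 0 T, R j t) + ∫ t in Ioc T D, R j t := by
    rw [← Ioc_union_Ioc_eq_Ioc hT hTD,
      setIntegral_union (Ioc_disjoint_Ioc_of_le le_rfl) measurableSet_Ioc hint hint]
  have hrate : ∫ t in Ioc T D, R j t ≤ (D - T) * r j :=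
    calc ∫ t in Ioc T D, R j t ≤ ∫ _ in Ioc T D, r j :=
          setIntegral_mono_on hint (integrableOn_const measure_Ioc_lt_top.ne) measurableSet_Ioc
            fun t _ => hrequirement j t
      _ = (D - T) * r j := by rw [setIntegral_const, Real.volume_real_Ioc_of_le hTD, smul_eq_mul]
  linarith [hvolume j]

theorem sum_setIntegral_Ioc_le (hR : IsFeasible n v r R) {T : ℝ} (hT : 0 ≤ T) :
    ∑ j, ∫ t in Ioc 0 T, R j t ≤ T := by
  obtain ⟨hintegrable, -, -, hcapacity, -, -⟩ := hR
  rw [← integral_finsetSum _ fun j _ => (hintegrable j).integrableOn]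
  calc ∫ t in Ioc 0 T, ∑ j, R j t ≤ ∫ _ in Ioc 0 T, (1 : ℝ) :=
        setIntegral_mono_on (integrable_finsetSum _ fun j _ => (hintegrable j).integrableOn)
          (integrableOn_const measure_Ioc_lt_top.ne) measurableSet_Ioc fun t _ => hcapacity t
    _ = T := by
      rw [setIntegral_const, Real.volume_real_Ioc_of_le hT, smul_eq_mul, mul_one, sub_zero]

theorem sum_sub_le_of_compTime_le (hR : IsFeasible n v r R) {d : Fin n → ℝ} {T : ℝ}
    (hT : 0 ≤ T) (hC : ∀ j, compTime n R j ≤ ENNReal.ofReal (d j)) :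
    ∑ j, (v j - (max (d j) T - T) * r j) ≤ T :=
  (Finset.sum_le_sum fun j _ => hR.sub_le_setIntegral_Ioc hT (hC j)).trans
    (hR.sum_setIntegral_Ioc_le hT)

end IsFeasible

theorem log_div_le_sum_Ico_inv {k n : ℕ} (hkn : k ≤ n) :
    Real.log ((n + 1) / (k + 1)) ≤ ∑ j ∈ Finset.Ico k n, ((j : ℝ) + 1)⁻¹ := by
  have hanti : AntitoneOn (fun x : ℝ => (x + 1)⁻¹) (Set.Icc k n) := fun x hx y _ hxy =>
    inv_anti₀ (by linarith [hx.1, (k.cast_nonneg : (0 : ℝ) ≤ k)]) (by linarith)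
  calc Real.log ((n + 1) / (k + 1)) = ∫ x in (k : ℝ)..n, (x + 1)⁻¹ := by
        rw [intervalIntegral.integral_comp_add_right (fun x => x⁻¹), integral_inv]
        rw [Set.uIcc_of_le (by gcongr)]
        exact fun h => by linarith [h.1, (k.cast_nonneg : (0 : ℝ) ≤ k)]
    _ ≤ ∑ j ∈ Finset.Ico k n, ((j : ℝ) + 1)⁻¹ := hanti.integral_le_sum_Ico hkn

theorem one_lt_log_div_sub_one {c : ℝ} (hc1 : 1 < c) (hc : c < Real.exp 1 / (Real.exp 1 - 1)) :
    1 < Real.log (c / (c - 1)) := by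
  have he : 1 < Real.exp 1 := by linarith [Real.add_one_lt_exp one_ne_zero]
  rw [lt_div_iff₀ (by linarith)] at hc
  rw [Real.lt_log_iff_exp_lt (by positivity), lt_div_iff₀ (by linarith)]
  linarith

-- The `j`-th summand is the volume that job `j + 1` must process before time `c - 1`.
theorem mul_log_sub_le_sum_work_before {c : ℝ} (hc : 1 < c) {n : ℕ} (hn : 0 < n) :
    (c - 1) * Real.log (c / (c - 1)) - (c + 1) / n ≤
      ∑ j : Fin n, (1 / (n : ℝ) - (max (c * ((j : ℕ) + 1 : ℝ) / n) (c - 1) - (c - 1)) *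
        (1 / ((j : ℕ) + 1 : ℝ))) := by
  have hn' : (0 : ℝ) < n := Nat.cast_pos.2 hn
  have hc0 : 0 < c - 1 := sub_pos.2 hc
  set k := ⌊(c - 1) * n / c⌋₊
  have hk : c * k ≤ (c - 1) * n := by
    have := Nat.floor_le (show 0 ≤ (c - 1) * n / c by positivity)
    rw [le_div_iff₀ (by linarith)] at this
    linarith
  have hk' : (c - 1) * n < c * (k + 1) := by
    have := Nat.lt_floor_add_one ((c - 1) * n / c)
    rw [div_lt_iff₀ (by linarith)] at this
    linarith
  have hkn : k ≤ n := by exact_mod_cast (show (k : ℝ) ≤ n by nlinarith)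
  rw [Fin.sum_univ_eq_sum_range (fun j => 1 / (n : ℝ) -
      (max (c * (j + 1 : ℝ) / n) (c - 1) - (c - 1)) * (1 / (j + 1 : ℝ))),
    ← Finset.sum_range_add_sum_Ico _ hkn]
  have hearly : ∀ j ∈ Finset.range k,
      1 / (n : ℝ) - (max (c * (j + 1 : ℝ) / n) (c - 1) - (c - 1)) * (1 / (j + 1 : ℝ)) =
        1 / n := by
    intro j hj
    have hjk : (j : ℝ) + 1 ≤ k := by exact_mod_cast Finset.mem_range.1 hj
    rw [max_eq_right (by rw [div_le_iff₀ hn']; nlinarith)]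
    ring
  have hlate : ∀ j ∈ Finset.Ico k n,
      1 / (n : ℝ) - (max (c * (j + 1 : ℝ) / n) (c - 1) - (c - 1)) * (1 / (j + 1 : ℝ)) =
        (c - 1) * ((j : ℝ) + 1)⁻¹ - (c - 1) / n := by
    intro j hj
    have hkj : (k : ℝ) ≤ j := by exact_mod_cast (Finset.mem_Ico.1 hj).1
    rw [max_eq_left (by rw [le_div_iff₀ hn']; nlinarith)]
    field_simp
    ring
  rw [Finset.sum_congr rfl hearly, Finset.sum_congr rfl hlate, Finset.sum_sub_distrib,
    ← Finset.mul_sum, Finset.sum_const, Finset.sum_const, Finset.card_range, Nat.card_Ico,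
    nsmul_eq_mul, nsmul_eq_mul, Nat.cast_sub hkn]
  have hratio : c / (c - 1) / ((n + 1) / (k + 1)) ≤ 1 + 1 / ((c - 1) * (n + 1)) := by
    rw [div_le_iff₀ (by positivity)]
    field_simp
    nlinarith
  have hlog :
      Real.log (c / (c - 1)) - 1 / ((c - 1) * (n + 1)) ≤ Real.log ((n + 1) / (k + 1)) := by
    have := Real.log_le_sub_one_of_pos (show 0 < c / (c - 1) / ((n + 1) / (k + 1)) by positivity)
    rw [Real.log_div (by positivity) (by positivity)] at this
    linarith
  have hH := log_div_le_sum_Ico_inv hkn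
  have hfloor : -c / n ≤ k * (1 / n) - (n - k) * ((c - 1) / n) := by
    rw [← sub_nonneg]
    field_simp
    linarith
  have hinv : (c - 1) * (1 / ((c - 1) * (n + 1))) ≤ 1 / n := by
    rw [mul_one_div, div_le_div_iff₀ (by positivity) hn']
    nlinarith
  have hdiv : (c + 1) / n = c / n + 1 / n := add_div _ _ _
  have hmul := mul_le_mul_of_nonneg_left (hlog.trans hH) hc0.le
  rw [mul_sub] at hmul
  linarith [neg_div (n : ℝ) c]

/-- Lower bound `e/(e-1)` on the competitive ratio: for every `c < e/(e-1)` there is an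
instance (volumes `1/n`, resource requirements `1/j` for the `j`-th job, whose prefix
`{1,…,j}` has optimal makespan `j/n`) that admits no feasible schedule completing every
job `j` by time `c·j/n`. -/
theorem stmt8 (c : ℝ) (hc : c < Real.exp 1 / (Real.exp 1 - 1)) :
    ∃ n : ℕ, 1 ≤ n ∧
      ¬ ∃ R : Fin n → ℝ → ℝ,
          IsFeasible n (fun _ => 1 / (n : ℝ)) (fun j => 1 / ((j : ℕ) + 1 : ℝ)) R ∧
          ∀ j : Fin n,
            compTime n R j ≤ ENNReal.ofReal (c * ((j : ℕ) + 1 : ℝ) / (n : ℝ)) := by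
  have he : Real.exp 1 < 3 := by linarith [Real.exp_one_lt_d9]
  set c' := max c (3 / 2)
  have hc'1 : 1 < c' := lt_max_of_lt_right (by norm_num)
  have hc' : c' < Real.exp 1 / (Real.exp 1 - 1) :=
    max_lt hc (by rw [lt_div_iff₀ (by linarith [Real.add_one_lt_exp one_ne_zero])]; linarith)
  have hgap : 0 < (c' - 1) * (Real.log (c' / (c' - 1)) - 1) :=
    mul_pos (by linarith) (by linarith [one_lt_log_div_sub_one hc'1 hc'])
  obtain ⟨n, hsmall, hn⟩ := (((tendsto_const_div_atTop_nhds_zero_nat (c' + 1)).eventually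
    (gt_mem_nhds hgap)).and (eventually_gt_atTop 0)).exists
  refine ⟨n, hn, fun ⟨R, hR, hC⟩ => ?_⟩
  have hupper := hR.sum_sub_le_of_compTime_le (d := fun j => c' * ((j : ℕ) + 1 : ℝ) / n)
    (T := c' - 1) (by linarith) fun j =>
      (hC j).trans (ENNReal.ofReal_le_ofReal (by gcongr; exact le_max_left c _))
  have hlower := mul_log_sub_le_sum_work_before hc'1 hn
  linarith
end
end

section
/- Let J = {1,…,n} be a job set with volumes sorted in ascending order, v_1 ≤ v_2 ≤ … ≤ v_n. Then for every feasible schedule R for J, the total completion time satisfies Σ_{j=1}^n C_j(R) ≥ Σ_{j=1}^n Σ_{i=1}^j v_i. (The squashed-area bound: C^A := Σ_{j=1}^n Σ_{i=1}^j v_i, the SPT total completion time when all resource requirements are relaxed to 1, is a lower bound on the optimal total completion time.) -/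
/-!
Sort the jobs by completion time. The `j + 1` jobs finishing first all run inside `[0, C]`,
where `C` is the `(j + 1)`-st smallest completion time, and the machine processes at most one unit
of volume per unit of time, so their total volume is at most `C`; since the volumes are sorted,
that total volume is at least `v₁ + ⋯ + v_{j+1}`. Summing over `j` gives the bound.
-/

open MeasureTheory Set ENNReal

noncomputable section

open Finset in
/- `Iic a \ S` and `S \ Iic a` have the same size and are separated by `a`. -/
theorem Finset.sum_Iic_le_sum_of_card_eq {α M : Type*} [LinearOrder α] [LocallyFiniteOrderBot α]
    [AddCommMonoid M] [PartialOrder M] [IsOrderedCancelAddMonoid M] {f : α → M}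
    (hf : Monotone f) {a : α} {S : Finset α} (hS : #S = #(Iic a)) :
    ∑ i ∈ Iic a, f i ≤ ∑ i ∈ S, f i := by
  classical
  rw [← sum_sdiff_le_sum_sdiff]
  calc ∑ i ∈ Iic a \ S, f i ≤ #(Iic a \ S) • f a :=
        sum_le_card_nsmul _ _ _ fun i hi => hf (mem_Iic.1 (mem_sdiff.1 hi).1)
    _ = #(S \ Iic a) • f a := by rw [card_sdiff_comm hS.symm]
    _ ≤ ∑ i ∈ S \ Iic a, f i := card_nsmul_le_sum _ _ _ fun i hi =>
        hf (not_le.1 fun h => (mem_sdiff.1 hi).2 (mem_Iic.2 h)).le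

theorem setIntegral_Ioi_zero_le {f : ℝ → ℝ} (hf : IntegrableOn f (Ioi 0)) {M : ℝ}
    (hM : 0 ≤ M) (h_le_one : ∀ t, f t ≤ 1) (h_nonpos : ∀ t, M < t → f t ≤ 0) :
    ∫ t in Ioi 0, f t ≤ M := by
  have h_ind : IntegrableOn ((Ioc 0 M).indicator fun _ => (1 : ℝ)) (Ioi 0) :=
    ((integrable_indicator_iff measurableSet_Ioc).2
      (integrableOn_const (by simp [Real.volume_Ioc]))).integrableOn
  calc ∫ t in Ioi 0, f t ≤ ∫ t in Ioi 0, (Ioc 0 M).indicator (fun _ => (1 : ℝ)) t := by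
        refine setIntegral_mono_on hf h_ind measurableSet_Ioi fun t ht => ?_
        rcases le_or_gt t M with htM | hMt
        · simpa [indicator_of_mem (show t ∈ Ioc 0 M from ⟨ht, htM⟩)] using h_le_one t
        · simpa [indicator_of_notMem (show t ∉ Ioc 0 M from fun h => hMt.not_ge h.2)]
            using h_nonpos t hMt
    _ = M := by
        rw [setIntegral_indicator measurableSet_Ioc,
          inter_eq_self_of_subset_right Ioc_subset_Ioi_self]
        simp [hM]

theorem not_pos_of_compTime_le {n : ℕ} {R : Fin n → ℝ → ℝ} {j : Fin n} {M t : ℝ}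
    (hM : 0 ≤ M) (hC : compTime n R j ≤ ENNReal.ofReal M) (ht : M < t) :
    ¬ 0 < R j t := fun hpos =>
  ht.not_ge <| (ENNReal.ofReal_le_ofReal_iff hM).1 <|
    (le_iSup₂ (f := fun t (_ : t ∈ {t : ℝ | 0 < R j t}) => ENNReal.ofReal t) t hpos).trans hC

theorem IsFeasible.ofReal_sum_le_of_compTime_le {n : ℕ} {v r : Fin n → ℝ}
    {R : Fin n → ℝ → ℝ} (hR : IsFeasible n v r R) {S : Finset (Fin n)} {B : ℝ≥0∞}
    (hB : ∀ i ∈ S, compTime n R i ≤ B) :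
    ENNReal.ofReal (∑ i ∈ S, v i) ≤ B := by
  obtain ⟨h_int, h_range, -, h_total, -, h_vol⟩ := hR
  rcases eq_top_or_lt_top B with rfl | hB_lt
  · exact le_top
  rw [← ENNReal.ofReal_toReal hB_lt.ne] at hB ⊢
  refine ENNReal.ofReal_le_ofReal ?_
  have h_le_one (t : ℝ) : ∑ i ∈ S, R i t ≤ 1 :=
    (Finset.sum_le_sum_of_subset_of_nonneg S.subset_univ
      fun i _ _ => (h_range i t).1).trans (h_total t)
  have h_nonpos (t : ℝ) (ht : B.toReal < t) : ∑ i ∈ S, R i t ≤ 0 :=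
    Finset.sum_nonpos fun i hi =>
      not_lt.1 (not_pos_of_compTime_le toReal_nonneg (hB i hi) ht)
  calc ∑ i ∈ S, v i ≤ ∑ i ∈ S, ∫ t in Ioi 0, R i t :=
        Finset.sum_le_sum fun i _ => h_vol i
    _ = ∫ t in Ioi 0, ∑ i ∈ S, R i t :=
        (integral_finsetSum S fun i _ => (h_int i).integrableOn).symm
    _ ≤ B.toReal :=
        setIntegral_Ioi_zero_le (integrable_finsetSum S fun i _ => h_int i).integrableOn
          toReal_nonneg h_le_one h_nonpos

theorem stmt10_general (n : ℕ) (v r : Fin n → ℝ)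
    (hsorted : Monotone v)
    (R : Fin n → ℝ → ℝ) (hR : IsFeasible n v r R) :
    ENNReal.ofReal (∑ j, ∑ i ∈ Finset.Iic j, v i) ≤ ∑ j, compTime n R j := by
  set C := compTime n R
  set σ := Tuple.sort C
  have h_prefix (j : Fin n) : ENNReal.ofReal (∑ i ∈ Finset.Iic j, v i) ≤ C (σ j) := by
    refine (ENNReal.ofReal_le_ofReal (Finset.sum_Iic_le_sum_of_card_eq hsorted
      (Finset.card_image_of_injective _ σ.injective))).trans
      (hR.ofReal_sum_le_of_compTime_le ?_)
    simp only [Finset.mem_image, Finset.mem_Iic]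
    rintro _ ⟨i, hij, rfl⟩
    exact Tuple.monotone_sort C hij
  calc ENNReal.ofReal (∑ j, ∑ i ∈ Finset.Iic j, v i)
      ≤ ∑ j, ENNReal.ofReal (∑ i ∈ Finset.Iic j, v i) :=
        Finset.le_sum_of_subadditive _ ENNReal.ofReal_zero.le
          (fun _ _ => ENNReal.ofReal_add_le) _ _
    _ ≤ ∑ j, C (σ j) := Finset.sum_le_sum fun j _ => h_prefix j
    _ = ∑ j, C j := Equiv.sum_comp σ C

/-- The squashed-area bound: if the volumes are sorted ascending, the total completion
time of every feasible schedule is at least `∑_{j=1}^n ∑_{i=1}^j v_i`. -/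
theorem stmt10 (n : ℕ) (v r : Fin n → ℝ)
    (hv : ∀ j, 0 < v j) (hr : ∀ j, 0 < r j ∧ r j ≤ 1)
    (hsorted : Monotone v)
    (R : Fin n → ℝ → ℝ) (hR : IsFeasible n v r R) :
    ENNReal.ofReal (∑ j, ∑ i ∈ Finset.Iic j, v i) ≤ ∑ j, compTime n R j :=
  stmt10_general n v r hsorted R hR
end
end

section
/- For every job set J, the optimal total completion time dominates the optimal fractional total completion time plus half the total processing time: C* ≥ C^{F*} + (1/2)·Σ_{j∈J} v_j/r_j, where C* = inf{Σ_{j∈J} C_j(R) : R feasible for J} and C^{F*} = inf{Σ_{j∈J} C^F_j(R) : R feasible for J}. -/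
open MeasureTheory Set ENNReal

noncomputable section

/-- The fractional completion time of job `j` in schedule `R` (in `ℝ≥0∞`):
`∫_0^∞ R_j(t)·t/v_j dt`. -/
def fracCompTime (n : ℕ) (v : Fin n → ℝ) (R : Fin n → ℝ → ℝ) (j : Fin n) : ℝ≥0∞ :=
  ∫⁻ t in Ioi (0:ℝ), ENNReal.ofReal (R j t * t / v j)

/-! Rescale every job of a feasible schedule so that it receives exactly its volume `v_j`; this
keeps the schedule feasible and does not increase completion times. If a job has mass `m`, rate
at most `r` and vanishes after `C`, an exchange argument gives `∫ R t * t ≤ m C - m² / (2 r)`: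
the latest possible profile runs at rate `r` on `(C - m / r, C]`. Dividing by `m` and using
`m ≥ v` yields `C^F_j + v_j / (2 r_j) ≤ C_j` for the rescaled schedule. -/

section ExchangeBound

variable {R : ℝ → ℝ} {s : Set ℝ} {r a C : ℝ}

theorem setIntegral_mul_sub_le (hs : MeasurableSet s) (hr : 0 ≤ r) (haC : a ≤ C)
    (hint : IntegrableOn (fun t => R t * (t - a)) s) (hR0 : ∀ t ∈ s, 0 ≤ R t)
    (hRr : ∀ t ∈ s, R t ≤ r) (hRC : ∀ t ∈ s, C < t → R t = 0) :
    ∫ t in s, R t * (t - a) ≤ r * (C - a) ^ 2 / 2 := by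
  set g := (Ioc a C).indicator fun t => r * (t - a) with hg_def
  have hg : Integrable g :=
    (continuous_const.mul (continuous_id.sub continuous_const)).integrableOn_Ioc
      |>.integrable_indicator measurableSet_Ioc
  have hg0 : 0 ≤ g := indicator_nonneg fun t ht => mul_nonneg hr (sub_nonneg.2 ht.1.le)
  have hRg : ∀ t ∈ s, R t * (t - a) ≤ g t := by
    intro t hts
    by_cases hta : t ∈ Ioc a C
    · rw [hg_def, indicator_of_mem hta]
      exact mul_le_mul_of_nonneg_right (hRr t hts) (sub_nonneg.2 hta.1.le)
    · rw [hg_def, indicator_of_notMem hta]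
      rcases le_or_gt t a with hta' | hat
      · exact mul_nonpos_of_nonneg_of_nonpos (hR0 t hts) (sub_nonpos.2 hta')
      · rw [hRC t hts (lt_of_not_ge fun htC => hta ⟨hat, htC⟩), zero_mul]
  calc ∫ t in s, R t * (t - a)
      ≤ ∫ t in s, g t := setIntegral_mono_on hint hg.integrableOn hs hRg
    _ ≤ ∫ t, g t := setIntegral_le_integral hg (.of_forall hg0)
    _ = ∫ t in Ioc a C, r * (t - a) := integral_indicator measurableSet_Ioc
    _ = r * (C - a) ^ 2 / 2 := by
      rw [← intervalIntegral.integral_of_le haC]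
      simp only [intervalIntegral.integral_const_mul, intervalIntegral.integral_sub,
        intervalIntegral.intervalIntegrable_id, intervalIntegrable_const, integral_id,
        intervalIntegral.integral_const, smul_eq_mul]
      ring

theorem setIntegral_mul_id_le (hs : MeasurableSet s) (hr : 0 < r) (hR : IntegrableOn R s)
    (hRt : IntegrableOn (fun t => R t * t) s) (hR0 : ∀ t ∈ s, 0 ≤ R t)
    (hRr : ∀ t ∈ s, R t ≤ r) (hRC : ∀ t ∈ s, C < t → R t = 0) :
    ∫ t in s, R t * t ≤ (∫ t in s, R t) * C - (∫ t in s, R t) ^ 2 / (2 * r) := by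
  set m := ∫ t in s, R t
  have hm : 0 ≤ m := setIntegral_nonneg hs hR0
  have hsub : ∀ a, (fun t => R t * (t - a)) = fun t => R t * t - R t * a := fun a => by
    ext t; ring
  -- the optimal profile runs at rate `r` during the last `m / r` time units before `C`
  have hbound := setIntegral_mul_sub_le (a := C - m / r) hs hr.le
    (by linarith [div_nonneg hm hr.le]) (by rw [hsub]; exact hRt.sub (hR.mul_const _))
    hR0 hRr hRC
  rw [hsub, integral_sub hRt (hR.mul_const _), integral_mul_const] at hbound
  change _ - m * _ ≤ _ at hbound
  have hval : m * (C - m / r) + r * (C - (C - m / r)) ^ 2 / 2 = m * C - m ^ 2 / (2 * r) := by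
    field_simp
    ring
  linarith

theorem integrableOn_mul_id_of_eq_zero (hs : MeasurableSet s) (hs0 : s ⊆ Ici 0)
    (hR : IntegrableOn R s) (hRC : ∀ t ∈ s, C < t → R t = 0) : IntegrableOn (fun t => R t * t) s := by
  refine Integrable.mono' (hR.norm.mul_const |C|)
    (hR.aestronglyMeasurable.mul aestronglyMeasurable_id) ?_
  filter_upwards [ae_restrict_mem hs] with t hts
  rcases le_or_gt t C with htC | hCt
  · rw [norm_mul, Real.norm_of_nonneg (hs0 hts)]
    exact mul_le_mul_of_nonneg_left (htC.trans (le_abs_self C)) (norm_nonneg _)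
  · simp [hRC t hts hCt]

end ExchangeBound

def normalizeSchedule {n : ℕ} (v : Fin n → ℝ) (R : Fin n → ℝ → ℝ) (j : Fin n) (t : ℝ) :
    ℝ :=
  v j / (∫ s in Ioi (0:ℝ), R j s) * R j t

namespace IsFeasible

variable {n : ℕ} {v r : Fin n → ℝ} {R : Fin n → ℝ → ℝ}

theorem normalizeSchedule_mem_Icc (hR : IsFeasible n v r R) (hv : ∀ j, 0 < v j) (j : Fin n)
    (t : ℝ) : normalizeSchedule v R j t ∈ Icc 0 (R j t) := by
  obtain ⟨-, h01, -, -, -, hvle⟩ := hR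
  have hm : 0 < ∫ s in Ioi (0:ℝ), R j s := (hv j).trans_le (hvle j)
  exact ⟨mul_nonneg (div_nonneg (hv j).le hm.le) (h01 j t).1,
    mul_le_of_le_one_left (h01 j t).1 (div_le_one_of_le₀ (hvle j) hm.le)⟩

theorem normalizeSchedule_isFeasible (hR : IsFeasible n v r R) (hv : ∀ j, 0 < v j) :
    IsFeasible n v r (normalizeSchedule v R) := by
  have hle := hR.normalizeSchedule_mem_Icc hv
  obtain ⟨hint, h01, hneg, hsum, hrle, hvle⟩ := hR
  refine ⟨fun j => (hint j).const_mul _,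
    fun j t => ⟨(hle j t).1, (hle j t).2.trans (h01 j t).2⟩,
    fun j t ht => by simp [normalizeSchedule, hneg j t ht],
    fun t => (Finset.sum_le_sum fun j _ => (hle j t).2).trans (hsum t),
    fun j t => (hle j t).2.trans (hrle j t), fun j => ?_⟩
  simp only [normalizeSchedule]
  rw [integral_const_mul, div_mul_cancel₀ _ ((hv j).trans_le (hvle j)).ne']

theorem eq_zero_of_toReal_compTime_lt (hR : IsFeasible n v r R) {j : Fin n}
    (hC : compTime n R j ≠ ⊤) {t : ℝ} (ht : (compTime n R j).toReal < t) : R j t = 0 := by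
  by_contra hne
  have hpos : 0 < R j t := (hR.2.1 j t).1.lt_of_ne' hne
  have hle : ENNReal.ofReal t ≤ compTime n R j := le_biSup (fun t => ENNReal.ofReal t) hpos
  exact ht.not_ge ((ENNReal.ofReal_le_iff_le_toReal hC).1 hle)

theorem fracCompTime_normalizeSchedule_add_le_compTime (hR : IsFeasible n v r R)
    (hv : ∀ j, 0 < v j) (j : Fin n) (hr : 0 < r j) :
    fracCompTime n v (normalizeSchedule v R) j + ENNReal.ofReal (v j / (2 * r j))
      ≤ compTime n R j := by
  rcases eq_or_ne (compTime n R j) ⊤ with htop | htop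
  · simp [htop]
  set C := (compTime n R j).toReal
  have hRC : ∀ t ∈ Ioi (0:ℝ), C < t → R j t = 0 := fun t _ =>
    hR.eq_zero_of_toReal_compTime_lt htop
  obtain ⟨hint, h01, -, -, hrle, hvle⟩ := hR
  set m := ∫ s in Ioi (0:ℝ), R j s with hm_def
  have hm : 0 < m := (hv j).trans_le (hvle j)
  have hRt := integrableOn_mul_id_of_eq_zero measurableSet_Ioi Ioi_subset_Ici_self
    (hint j).integrableOn hRC
  have hRt0 : ∀ t ∈ Ioi (0:ℝ), 0 ≤ R j t * t := fun t ht =>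
    mul_nonneg (h01 j t).1 (le_of_lt ht)
  have hfrac : fracCompTime n v (normalizeSchedule v R) j
      = ENNReal.ofReal ((∫ t in Ioi (0:ℝ), R j t * t) / m) := by
    rw [← integral_div, ofReal_integral_eq_lintegral_ofReal (hRt.div_const m)]
    · refine setLIntegral_congr_fun measurableSet_Ioi fun t _ => ?_
      rw [normalizeSchedule, ← hm_def]
      field_simp [(hv j).ne']
    · filter_upwards [ae_restrict_mem measurableSet_Ioi] with t ht
      exact div_nonneg (hRt0 t ht) hm.le
  have hkey := setIntegral_mul_id_le measurableSet_Ioi hr (hint j).integrableOn hRt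
    (fun t _ => (h01 j t).1) (fun t _ => hrle j t) hRC
  rw [← hm_def] at hkey
  have hmean : (∫ t in Ioi (0:ℝ), R j t * t) / m ≤ C - m / (2 * r j) := by
    rw [div_le_iff₀ hm]
    linarith [show (C - m / (2 * r j)) * m = m * C - m ^ 2 / (2 * r j) by ring]
  have hvm : v j / (2 * r j) ≤ m / (2 * r j) := by gcongr; exact hvle j
  have hI : 0 ≤ ∫ t in Ioi (0:ℝ), R j t * t := setIntegral_nonneg measurableSet_Ioi hRt0
  rw [hfrac, ← ENNReal.ofReal_toReal htop,
    ← ENNReal.ofReal_add (div_nonneg hI hm.le) (div_nonneg (hv j).le (by positivity))]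
  exact ENNReal.ofReal_le_ofReal (by linarith)

end IsFeasible

/-- The optimal total completion time dominates the optimal fractional total completion
time plus half the total processing time: `C* ≥ C^{F*} + (1/2)·∑_j v_j/r_j`. -/
theorem stmt11 (n : ℕ) (v r : Fin n → ℝ)
    (hv : ∀ j, 0 < v j) (hr : ∀ j, 0 < r j ∧ r j ≤ 1) :
    sInf {x : ℝ≥0∞ | ∃ R, IsFeasible n v r R ∧ x = ∑ j, fracCompTime n v R j}
      + ENNReal.ofReal ((1 / 2) * ∑ j, v j / r j)
    ≤ sInf {x : ℝ≥0∞ | ∃ R, IsFeasible n v r R ∧ x = ∑ j, compTime n R j} := by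
  refine le_sInf ?_
  rintro _ ⟨R, hR, rfl⟩
  have hhalf : ENNReal.ofReal ((1 / 2) * ∑ j, v j / r j)
      = ∑ j, ENNReal.ofReal (v j / (2 * r j)) := by
    rw [Finset.mul_sum, ENNReal.ofReal_sum_of_nonneg fun j _ =>
      mul_nonneg (by norm_num) (div_nonneg (hv j).le (hr j).1.le)]
    congr! 2 with j
    ring
  calc _ ≤ ∑ j, fracCompTime n v (normalizeSchedule v R) j
          + ∑ j, ENNReal.ofReal (v j / (2 * r j)) :=
        add_le_add (sInf_le (by exact ⟨_, hR.normalizeSchedule_isFeasible hv, rfl⟩)) hhalf.le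
    _ = ∑ j, (fracCompTime n v (normalizeSchedule v R) j + ENNReal.ofReal (v j / (2 * r j))) :=
        Finset.sum_add_distrib.symm
    _ ≤ ∑ j, compTime n R j := Finset.sum_le_sum fun j _ =>
        hR.fracCompTime_normalizeSchedule_add_le_compTime hv j (hr j).1
end
end

section
/- Let f : ℝ_{≥0} → ℝ_{≥0} be integrable with ∫_0^∞ f(t) dt = v > 0, let T = sup{t : f(t) > 0}, and suppose f is non-decreasing on [0, T) (f is ascending until its completion). Let c = (1/v)·∫_0^∞ t·f(t) dt be the fractional completion time. Then ∫_0^c f(t) dt ≤ v/2; equivalently, at least half of the volume v is scheduled after time c. -/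
/-!
Write `G` and `b` for the volume scheduled before and after `c`, and `k = f c`. Since `c` is the
barycenter of `f`, the torques about `c` balance: `∫₀ᶜ (c - t) f = ∫_c^∞ (t - c) f`. Ascending means
`f ≤ k` before `c`, while after `c` we have `f ≥ k` up to the completion time and `f = 0` beyond
it. By the bathtub principle the left torque is at least that of mass `G` spread with density `k`
just before `c`, namely `G² / (2k)`, and the right torque is at most that of mass `b` spread with
density `k` just after `c`, namely `b² / (2k)`. Hence `G ≤ b`.
-/

open MeasureTheory Set

theorem setIntegral_Ioc_right_sub_mul {p q : ℝ} (hpq : p ≤ q) (k : ℝ) :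
    ∫ t in Ioc p q, (q - t) * k = k * (q - p) ^ 2 / 2 := by
  rw [← intervalIntegral.integral_of_le hpq, intervalIntegral.integral_mul_const,
    intervalIntegral.integral_comp_sub_left (fun x => x), integral_id]
  ring

theorem setIntegral_Ioc_sub_left_mul {p q : ℝ} (hpq : p ≤ q) (k : ℝ) :
    ∫ t in Ioc p q, (t - p) * k = k * (q - p) ^ 2 / 2 := by
  rw [← intervalIntegral.integral_of_le hpq, intervalIntegral.integral_mul_const,
    intervalIntegral.integral_comp_sub_right (fun x => x), integral_id]
  ring

theorem integrableOn_sub_mul {s : Set ℝ} {f : ℝ → ℝ} (c : ℝ) (hf : IntegrableOn f s)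
    (htf : IntegrableOn (fun t => t * f t) s) : IntegrableOn (fun t => (t - c) * f t) s := by
  convert htf.sub (hf.const_mul c) using 1
  ext t
  simp only [Pi.sub_apply, sub_mul]

theorem setIntegral_mul_le_of_sub_mul_sub_nonneg {α : Type*} [MeasurableSpace α]
    {μ : Measure α} {s : Set α} {w g h : α → ℝ} (r : ℝ) (hs : MeasurableSet s)
    (hg : IntegrableOn g s μ) (hh : IntegrableOn h s μ)
    (hwg : IntegrableOn (fun x => w x * g x) s μ) (hwh : IntegrableOn (fun x => w x * h x) s μ)
    (hgh : ∫ x in s, g x ∂μ = ∫ x in s, h x ∂μ)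
    (hsign : ∀ x ∈ s, 0 ≤ (w x - r) * (g x - h x)) :
    ∫ x in s, w x * h x ∂μ ≤ ∫ x in s, w x * g x ∂μ := by
  have hexpand : (fun x => (w x - r) * (g x - h x)) =
      fun x => (w x * g x - w x * h x) - r * (g x - h x) := by
    ext; ring
  have hnonneg := setIntegral_nonneg (μ := μ) hs hsign
  rw [hexpand, integral_sub, integral_sub hwg hwh, integral_const_mul, integral_sub hg hh,
    hgh] at hnonneg
  · linarith
  exacts [hwg.sub hwh, (hg.sub hh).const_mul r]

theorem sq_setIntegral_Ioc_le {f : ℝ → ℝ} {a c k : ℝ} (hac : a ≤ c) (hk : 0 ≤ k)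
    (hf : IntegrableOn f (Ioc a c)) (hf0 : ∀ t ∈ Ioc a c, 0 ≤ f t)
    (hfk : ∀ t ∈ Ioc a c, f t ≤ k) :
    (∫ t in Ioc a c, f t) ^ 2 ≤ 2 * k * ∫ t in Ioc a c, (c - t) * f t := by
  set G := ∫ t in Ioc a c, f t
  have hG0 : 0 ≤ G := setIntegral_nonneg measurableSet_Ioc hf0
  have hGk : G ≤ k * (c - a) := by
    have := setIntegral_mono_on hf (integrableOn_const measure_Ioc_lt_top.ne) measurableSet_Ioc hfk
    rwa [setIntegral_const, Real.volume_real_Ioc_of_le hac, smul_eq_mul, mul_comm] at this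
  rcases hk.eq_or_lt with rfl | hk
  · nlinarith
  have hwf : IntegrableOn (fun t => (c - t) * f t) (Ioc a c) :=
    hf.continuousOn_mul_of_subset (by fun_prop) isCompact_Icc measurableSet_Ioc Ioc_subset_Icc_self
  set d := c - G / k with hd_def
  have hGk_div : G / k ≤ c - a := by rw [div_le_iff₀ hk]; linarith
  have hd : d ∈ Icc a c := ⟨by linarith, by have := div_nonneg hG0 hk.le; linarith⟩
  have hsub : Ioc d c ⊆ Ioc a c := Ioc_subset_Ioc_left hd.1
  set φ := (Ioc d c).indicator fun _ => k
  have hφ : IntegrableOn φ (Ioc a c) :=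
    ((integrableOn_const measure_Ioc_lt_top.ne).integrable_indicator measurableSet_Ioc).integrableOn
  have hwφ_eq : (fun t => (c - t) * φ t) = (Ioc d c).indicator fun t => (c - t) * k := by
    ext t; exact (indicator_mul_right _ _ _).symm
  have hwφ : IntegrableOn (fun t => (c - t) * φ t) (Ioc a c) := by
    rw [hwφ_eq]
    exact ((Continuous.integrableOn_Ioc (by fun_prop)).integrable_indicator
      measurableSet_Ioc).integrableOn
  have hφG : ∫ t in Ioc a c, φ t = G := by
    rw [setIntegral_indicator measurableSet_Ioc, inter_eq_right.2 hsub, setIntegral_const,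
      Real.volume_real_Ioc_of_le hd.2, smul_eq_mul, hd_def]
    field_simp
    ring
  have hwφG : ∫ t in Ioc a c, (c - t) * φ t = G ^ 2 / (2 * k) := by
    rw [hwφ_eq, setIntegral_indicator measurableSet_Ioc, inter_eq_right.2 hsub,
      setIntegral_Ioc_right_sub_mul hd.2, hd_def]
    field_simp
    ring
  have hcompare := setIntegral_mul_le_of_sub_mul_sub_nonneg (G / k) measurableSet_Ioc hf hφ hwf hwφ
    hφG.symm fun t ht => by
      simp only [φ]
      by_cases hdt : d < t
      · rw [indicator_of_mem (show t ∈ Ioc d c from ⟨hdt, ht.2⟩)]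
        nlinarith [hfk t ht]
      · rw [indicator_of_notMem fun h : t ∈ Ioc d c => hdt h.1]
        nlinarith [hf0 t ht]
  rw [hwφG] at hcompare
  calc G ^ 2 = 2 * k * (G ^ 2 / (2 * k)) := by field_simp
    _ ≤ 2 * k * ∫ t in Ioc a c, (c - t) * f t := by gcongr

theorem mul_sub_le_setIntegral_Ioi {f : ℝ → ℝ} {c u k : ℝ} (hcu : c ≤ u)
    (hf : IntegrableOn f (Ioi c)) (hf0 : ∀ t ∈ Ioi c, 0 ≤ f t) (hfk : ∀ t ∈ Ioo c u, k ≤ f t) :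
    k * (u - c) ≤ ∫ t in Ioi c, f t :=
  calc k * (u - c) = ∫ _ in Ioo c u, k := by
        rw [setIntegral_const, Real.volume_real_Ioo_of_le hcu, smul_eq_mul, mul_comm]
    _ ≤ ∫ t in Ioo c u, f t :=
        setIntegral_mono_on (integrableOn_const measure_Ioo_lt_top.ne)
          (hf.mono_set Ioo_subset_Ioi_self) measurableSet_Ioo hfk
    _ ≤ ∫ t in Ioi c, f t :=
        setIntegral_mono_set hf (ae_restrict_of_forall_mem measurableSet_Ioi hf0)
          Ioo_subset_Ioi_self.eventuallyLE

theorem two_mul_setIntegral_Ioi_le_sq_of_le_of_eq_zero {f : ℝ → ℝ} {c k T : ℝ} (hk : 0 < k)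
    (hf : IntegrableOn f (Ioi c)) (hwf : IntegrableOn (fun t => (t - c) * f t) (Ioi c))
    (hf0 : ∀ t ∈ Ioi c, 0 ≤ f t) (hfk : ∀ t ∈ Ioo c T, k ≤ f t)
    (hf_eq : ∀ t ∈ Ioi c, T < t → f t = 0) :
    2 * k * ∫ t in Ioi c, (t - c) * f t ≤ (∫ t in Ioi c, f t) ^ 2 := by
  set b := ∫ t in Ioi c, f t
  have hb0 : 0 ≤ b := setIntegral_nonneg measurableSet_Ioi hf0
  set e := c + b / k with he_def
  have hce : c ≤ e := by have := div_nonneg hb0 hk.le; linarith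
  have hTe : T ≤ e := by
    rcases le_or_gt T c with hTc | hcT
    · exact hTc.trans hce
    · have := mul_sub_le_setIntegral_Ioi hcT.le hf hf0 hfk
      rw [he_def, ← sub_le_iff_le_add', le_div_iff₀ hk, mul_comm]
      exact this
  have hsub : Ioc c e ⊆ Ioi c := Ioc_subset_Ioi_self
  set ψ := (Ioc c e).indicator fun _ => k
  have hψ : IntegrableOn ψ (Ioi c) :=
    ((integrableOn_const measure_Ioc_lt_top.ne).integrable_indicator measurableSet_Ioc).integrableOn
  have hwψ_eq : (fun t => (t - c) * ψ t) = (Ioc c e).indicator fun t => (t - c) * k := by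
    ext t; exact (indicator_mul_right (Ioc c e) (fun t => t - c) fun _ => k).symm
  have hwψ : IntegrableOn (fun t => (t - c) * ψ t) (Ioi c) := by
    rw [hwψ_eq]
    exact ((Continuous.integrableOn_Ioc (by fun_prop)).integrable_indicator
      measurableSet_Ioc).integrableOn
  have hψb : ∫ t in Ioi c, ψ t = b := by
    rw [setIntegral_indicator measurableSet_Ioc, inter_eq_right.2 hsub, setIntegral_const,
      Real.volume_real_Ioc_of_le hce, smul_eq_mul, he_def]
    field_simp
    ring
  have hwψb : ∫ t in Ioi c, (t - c) * ψ t = b ^ 2 / (2 * k) := by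
    rw [hwψ_eq, setIntegral_indicator measurableSet_Ioc, inter_eq_right.2 hsub,
      setIntegral_Ioc_sub_left_mul hce, he_def]
    field_simp
    ring
  have hcompare := setIntegral_mul_le_of_sub_mul_sub_nonneg (T - c) measurableSet_Ioi hψ hf hwψ
    hwf hψb fun t ht => by
      simp only [ψ]
      rcases lt_trichotomy t T with htT | rfl | hTt
      · rw [indicator_of_mem (show t ∈ Ioc c e from ⟨ht, (htT.trans_le hTe).le⟩)]
        nlinarith [hfk t ⟨ht, htT⟩]
      · simp
      · rw [hf_eq t ht hTt, sub_zero]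
        exact mul_nonneg (by linarith) (indicator_nonneg (fun _ _ => hk.le) t)
  rw [hwψb] at hcompare
  calc 2 * k * ∫ t in Ioi c, (t - c) * f t ≤ 2 * k * (b ^ 2 / (2 * k)) := by gcongr
    _ = b ^ 2 := by field_simp

theorem two_mul_setIntegral_Ioi_le_sq {f : ℝ → ℝ} {c k : ℝ} (hk : 0 ≤ k)
    (hf : IntegrableOn f (Ioi c)) (hwf : IntegrableOn (fun t => (t - c) * f t) (Ioi c))
    (hf0 : ∀ t ∈ Ioi c, 0 ≤ f t) (hfk : ∀ s u, c < s → s < u → 0 < f u → k ≤ f s) :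
    2 * k * ∫ t in Ioi c, (t - c) * f t ≤ (∫ t in Ioi c, f t) ^ 2 := by
  rcases hk.eq_or_lt with rfl | hk
  · simp only [mul_zero, zero_mul]
    positivity
  set P := {u | c < u ∧ 0 < f u}
  have hf_eq : ∀ t ∈ Ioi c, t ∉ P → f t = 0 := fun t ht htP =>
    (not_lt.1 fun hft => htP ⟨ht, hft⟩).antisymm (hf0 t ht)
  rcases P.eq_empty_or_nonempty with hP | hP
  · exact two_mul_setIntegral_Ioi_le_sq_of_le_of_eq_zero (T := c) hk hf hwf hf0 (by simp)
      fun t ht _ => hf_eq t ht (hP ▸ notMem_empty t)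
  have hPbdd : BddAbove P := ⟨c + (∫ t in Ioi c, f t) / k, fun u hu => by
    have := mul_sub_le_setIntegral_Ioi hu.1.le hf hf0 fun s hs => hfk s u hs.1 hs.2 hu.2
    rw [← sub_le_iff_le_add', le_div_iff₀ hk, mul_comm]
    exact this⟩
  refine two_mul_setIntegral_Ioi_le_sq_of_le_of_eq_zero (T := sSup P) hk hf hwf hf0
    (fun t ht => ?_) fun t ht hPt => hf_eq t ht fun htP => (le_csSup hPbdd htP).not_gt hPt
  obtain ⟨u, hu, htu⟩ := exists_lt_of_lt_csSup hP ht.2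
  exact hfk t u ht.1 htu hu.2

theorem setIntegral_mul_lt_mul_setIntegral {s : Set ℝ} {f : ℝ → ℝ} {c : ℝ}
    (hs : MeasurableSet s) (hf : IntegrableOn f s) (htf : IntegrableOn (fun t => t * f t) s)
    (hf0 : ∀ t ∈ s, 0 ≤ f t) (hf_eq : ∀ t ∈ s, c < t → f t = 0) (hmass : 0 < ∫ t in s, f t) :
    ∫ t in s, t * f t < c * ∫ t in s, f t := by
  have hwf : IntegrableOn (fun t => (t - c) * f t) s := integrableOn_sub_mul c hf htf
  have hnonpos : ∀ t ∈ s, (t - c) * f t ≤ 0 := fun t ht => by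
    rcases le_or_gt t c with htc | hct
    · exact mul_nonpos_of_nonpos_of_nonneg (by linarith) (hf0 t ht)
    · rw [hf_eq t ht hct, mul_zero]
  have hneg : ∫ t in s, (t - c) * f t < 0 := by
    rw [← neg_pos, ← integral_neg, setIntegral_pos_iff_support_of_nonneg_ae
      (ae_restrict_of_forall_mem hs fun t ht => neg_nonneg.2 (hnonpos t ht)) hwf.neg]
    rw [setIntegral_pos_iff_support_of_nonneg_ae (ae_restrict_of_forall_mem hs hf0) hf] at hmass
    calc 0 < volume (Function.support f ∩ s) := hmass
      _ = volume ((Function.support f ∩ s) \ {c}) := (measure_sdiff_null (measure_singleton c)).symm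
      _ ≤ volume (Function.support (fun t => -((t - c) * f t)) ∩ s) :=
        measure_mono fun t ⟨⟨hft, hts⟩, htc⟩ =>
          ⟨neg_ne_zero.2 (mul_ne_zero (sub_ne_zero.2 htc) hft), hts⟩
  simp_rw [sub_mul] at hneg
  rw [integral_sub htf (hf.const_mul c), integral_const_mul] at hneg
  linarith

theorem setIntegral_Ioc_sub_mul_eq_setIntegral_Ioi {f : ℝ → ℝ} {a c : ℝ} (hac : a ≤ c)
    (hf : IntegrableOn f (Ioi a)) (htf : IntegrableOn (fun t => t * f t) (Ioi a))
    (hc : ∫ t in Ioi a, t * f t = c * ∫ t in Ioi a, f t) :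
    ∫ t in Ioc a c, (c - t) * f t = ∫ t in Ioi c, (t - c) * f t := by
  have hwf := integrableOn_sub_mul c hf htf
  have hzero : ∫ t in Ioi a, (t - c) * f t = 0 := by
    simp_rw [sub_mul]
    rw [integral_sub htf (hf.const_mul c), integral_const_mul, hc, sub_self]
  rw [← Ioc_union_Ioi_eq_Ioi hac, setIntegral_union Ioc_disjoint_Ioi_same measurableSet_Ioi
    (hwf.mono_set Ioc_subset_Ioi_self) (hwf.mono_set (Ioi_subset_Ioi hac))] at hzero
  have hneg : ∫ t in Ioc a c, (c - t) * f t = -∫ t in Ioc a c, (t - c) * f t := by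
    rw [← integral_neg]
    simp_rw [← neg_mul, neg_sub]
  linarith

theorem stmt12_general (f : ℝ → ℝ) (hf : Integrable f)
    (hpos : ∀ t, 0 ≤ f t)
    (v : ℝ) (hv : 0 < v) (hvol : (∫ t in Ioi (0:ℝ), f t) = v)
    (hasc : MonotoneOn f {s : ℝ | 0 ≤ s ∧ ∃ u, s < u ∧ 0 < f u})
    (c : ℝ) (hc : c = (1 / v) * ∫ t in Ioi (0:ℝ), t * f t) :
    (∫ t in (0:ℝ)..c, f t) ≤ v / 2 := by
  have hmean : ∫ t in Ioi 0, t * f t = c * v := by rw [hc]; field_simp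
  have hc0 : 0 ≤ c := hc ▸ mul_nonneg (by positivity)
    (setIntegral_nonneg measurableSet_Ioi fun t ht => mul_nonneg (le_of_lt ht) (hpos t))
  rcases hc0.eq_or_lt with rfl | hc0
  · simp only [intervalIntegral.integral_same]
    linarith
  have htf : IntegrableOn (fun t => t * f t) (Ioi 0) := by
    by_contra h
    rw [integral_undef h] at hmean
    nlinarith
  obtain ⟨u, hcu, hfu⟩ : ∃ u, c < u ∧ 0 < f u := by
    by_contra! h
    have := setIntegral_mul_lt_mul_setIntegral measurableSet_Ioi hf.integrableOn htf
      (fun t _ => hpos t) (fun t _ ht => (h t ht).antisymm (hpos t)) (hvol ▸ hv)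
    rw [hmean, hvol] at this
    exact this.false
  have hS : ∀ t, 0 ≤ t → t < u → t ∈ {s : ℝ | 0 ≤ s ∧ ∃ u, s < u ∧ 0 < f u} :=
    fun t ht htu => ⟨ht, u, htu, hfu⟩
  have hleft := sq_setIntegral_Ioc_le hc0.le (hpos c) hf.integrableOn (fun t _ => hpos t)
    fun t ht => hasc (hS t ht.1.le (ht.2.trans_lt hcu)) (hS c hc0.le hcu) ht.2
  have hright := two_mul_setIntegral_Ioi_le_sq (hpos c) hf.integrableOn
    ((integrableOn_sub_mul c hf.integrableOn htf).mono_set (Ioi_subset_Ioi hc0.le))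
    (fun t _ => hpos t)
    fun s w hcs hsw hfw => hasc (hS c hc0.le hcu) ⟨hc0.le.trans hcs.le, w, hsw, hfw⟩ hcs.le
  rw [setIntegral_Ioc_sub_mul_eq_setIntegral_Ioi hc0.le hf.integrableOn htf
    (by rw [hmean, hvol])] at hleft
  have hhalf : ∫ t in Ioc 0 c, f t ≤ ∫ t in Ioi c, f t :=
    (pow_le_pow_iff_left₀ (setIntegral_nonneg measurableSet_Ioc fun t _ => hpos t)
      (setIntegral_nonneg measurableSet_Ioi fun t _ => hpos t) two_ne_zero).1 (hleft.trans hright)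
  have hsplit := intervalIntegral.integral_interval_add_Ioi hf.integrableOn hf.integrableOn
    (a := 0) (b := c)
  rw [intervalIntegral.integral_of_le hc0.le] at hsplit ⊢
  linarith

/-- If a job's resource assignment `f` (nonnegative, integrable, vanishing on negatives)
schedules total volume `v > 0` and is non-decreasing on `[0, T)` where
`T = sup{t : f t > 0}` — here formalized as the set of nonnegative times that are
strictly below some point of the support — then at most half of the volume is scheduled
before the fractional completion time `c = (1/v)·∫_0^∞ t·f(t) dt`. -/
theorem stmt12 (f : ℝ → ℝ) (hf : Integrable f)
    (hpos : ∀ t, 0 ≤ f t) (hneg : ∀ t < (0:ℝ), f t = 0)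
    (v : ℝ) (hv : 0 < v) (hvol : (∫ t in Ioi (0:ℝ), f t) = v)
    (hasc : MonotoneOn f {s : ℝ | 0 ≤ s ∧ ∃ u, s < u ∧ 0 < f u})
    (c : ℝ) (hc : c = (1 / v) * ∫ t in Ioi (0:ℝ), t * f t) :
    (∫ t in (0:ℝ)..c, f t) ≤ v / 2 :=
  stmt12_general f hf hpos v hv hvol hasc c hc
end

section
/- Let J = {1,…,n} be a job set with volumes sorted in ascending order, v_1 ≤ v_2 ≤ … ≤ v_n, and let R^G be the Greedy schedule for J: recursively in ascending order of volumes, R^G_j(t) = 1_{t < t_j}·min(r_j, 1 − Σ_{i=1}^{j−1} R^G_i(t)), where t_j > 0 is the completion time chosen so that ∫_0^{t_j} min(r_j, 1 − Σ_{i=1}^{j−1} R^G_i(t)) dt = v_j. Then the total completion time of Greedy satisfies Σ_{j=1}^n t_j ≤ Σ_{j=1}^n Σ_{i=1}^j v_i + Σ_{j=1}^n v_j/r_j, i.e. C(R^G) ≤ C^A + C^L. -/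
/-!
At every instant before `t_j`, job `j` either receives its full requirement `r_j` or all of the
capacity `1 - L_j(t)` left over by the smaller jobs, so `1 ≤ R_j(t) / r_j + (L_j(t) + R_j(t))`.
Integrating over `[0, t_j]` gives `t_j ≤ v_j / r_j + ∑_{i < j} v_i + v_j`, because each earlier
job has scheduled at most its volume by then; summing over `j` gives `C^A + C^L`.
-/

open MeasureTheory Set

theorem Finset.sum_Iio_le_one_of_le_one_sub {ι : Type*} [LinearOrder ι] [LocallyFiniteOrderBot ι]
    {x : ι → ℝ} {j : ι} (hx : ∀ i < j, x i ≤ 1 - ∑ k ∈ Finset.Iio i, x k) :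
    ∑ i ∈ Finset.Iio j, x i ≤ 1 := by
  rcases (Finset.Iio j).eq_empty_or_nonempty with hempty | hne
  · simp [hempty]
  set m := (Finset.Iio j).max' hne
  have hmj : m < j := Finset.mem_Iio.mp ((Finset.Iio j).max'_mem hne)
  have hIio : Finset.Iio j = Finset.Iic m := by
    ext i
    simp only [Finset.mem_Iio, Finset.mem_Iic]
    exact ⟨fun hi => (Finset.Iio j).le_max' i (Finset.mem_Iio.mpr hi), fun hi => hi.trans_lt hmj⟩
  rw [hIio, ← Finset.Iio_insert, Finset.sum_insert Finset.notMem_Iio_self]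
  linarith [hx m hmj]

theorem one_le_min_div_add_add_min {r a : ℝ} (hr : 0 < r) (ha₀ : 0 ≤ a) (ha₁ : a ≤ 1) :
    1 ≤ min r (1 - a) / r + (a + min r (1 - a)) := by
  rcases le_total r (1 - a) with h | h
  · rw [min_eq_left h, div_self hr.ne']
    linarith
  · rw [min_eq_right h]
    have : 0 ≤ (1 - a) / r := div_nonneg (by linarith) hr.le
    linarith

theorem intervalIntegrable_of_measurable_of_mem_Icc {g : ℝ → ℝ} (hg : Measurable g)
    (hbound : ∀ t, g t ∈ Icc (0 : ℝ) 1) (a b : ℝ) : IntervalIntegrable g volume a b :=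
  (intervalIntegrable_const (c := (1 : ℝ))).mono_fun' hg.aestronglyMeasurable.restrict
    (Filter.Eventually.of_forall fun t => by
      simpa [abs_of_nonneg (hbound t).1] using (hbound t).2)

namespace Greedy

variable {ι : Type*} [LinearOrder ι] [LocallyFiniteOrderBot ι]

def load (R : ι → ℝ → ℝ) (j : ι) (t : ℝ) : ℝ := ∑ i ∈ Finset.Iio j, R i t

variable {r : ι → ℝ} {R : ι → ℝ → ℝ} {tj : ι → ℝ}

def IsSchedule (r tj : ι → ℝ) (R : ι → ℝ → ℝ) : Prop :=
  ∀ j t, R j t = if 0 ≤ t ∧ t < tj j then min (r j) (1 - load R j t) else 0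

namespace IsSchedule

variable (hr : ∀ j, 0 < r j) (hR : IsSchedule r tj R)
include hR

theorem le_one_sub_load_of_load_le_one {j : ι} {t : ℝ} (h : load R j t ≤ 1) :
    R j t ≤ 1 - load R j t := by
  rw [hR j t]
  split_ifs
  exacts [min_le_right _ _, sub_nonneg.mpr h]

theorem load_le_one [WellFoundedLT ι] (j : ι) (t : ℝ) : load R j t ≤ 1 := by
  induction j using WellFoundedLT.induction with
  | _ j ih =>
    exact Finset.sum_Iio_le_one_of_le_one_sub fun i hi =>
      le_one_sub_load_of_load_le_one hR (ih i hi)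

include hr

theorem nonneg [WellFoundedLT ι] (j : ι) (t : ℝ) : 0 ≤ R j t := by
  rw [hR j t]
  split_ifs
  exacts [le_min (hr j).le (sub_nonneg.mpr (load_le_one hR j t)), le_rfl]

theorem load_nonneg [WellFoundedLT ι] (j : ι) (t : ℝ) : 0 ≤ load R j t :=
  Finset.sum_nonneg fun i _ => nonneg hr hR i t

theorem mem_Icc [WellFoundedLT ι] (j : ι) (t : ℝ) : R j t ∈ Icc (0 : ℝ) 1 :=
  ⟨nonneg hr hR j t, by
    linarith [le_one_sub_load_of_load_le_one hR (load_le_one hR j t), load_nonneg hr hR j t]⟩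

omit hr in
theorem measurable [WellFoundedLT ι] (j : ι) : Measurable (R j) := by
  induction j using WellFoundedLT.induction with
  | _ j ih =>
    rw [show R j = _ from funext (hR j)]
    exact Measurable.ite measurableSet_Ico
      (measurable_const.min (measurable_const.sub
        (Finset.measurable_sum _ fun i hi => ih i (Finset.mem_Iio.mp hi))))
      measurable_const

theorem intervalIntegrable [WellFoundedLT ι] (j : ι) (a b : ℝ) :
    IntervalIntegrable (R j) volume a b :=
  intervalIntegrable_of_measurable_of_mem_Icc (measurable hR j) (mem_Icc hr hR j) a b

theorem load_intervalIntegrable [WellFoundedLT ι] (j : ι) (a b : ℝ) :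
    IntervalIntegrable (load R j) volume a b :=
  intervalIntegrable_of_measurable_of_mem_Icc (Finset.measurable_sum _ fun i _ => measurable hR i)
    (fun t => ⟨load_nonneg hr hR j t, load_le_one hR j t⟩) a b

theorem min_sub_load_intervalIntegrable [WellFoundedLT ι] (j : ι) (a b : ℝ) :
    IntervalIntegrable (fun t => min (r j) (1 - load R j t)) volume a b :=
  intervalIntegrable_of_measurable_of_mem_Icc
    (measurable_const.min (measurable_const.sub
      (Finset.measurable_sum _ fun i _ => measurable hR i)))
    (fun t => ⟨le_min (hr j).le (sub_nonneg.mpr (load_le_one hR j t)),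
      (min_le_right _ _).trans (sub_le_self 1 (load_nonneg hr hR j t))⟩) a b

omit hr in
theorem integral_eq_integral_min {j : ι} (hj : 0 ≤ tj j) :
    ∫ t in (0 : ℝ)..tj j, R j t = ∫ t in (0 : ℝ)..tj j, min (r j) (1 - load R j t) := by
  simp only [intervalIntegral.integral_of_le hj, integral_Ioc_eq_integral_Ioo]
  exact setIntegral_congr_fun measurableSet_Ioo fun t ht => by rw [hR j t, if_pos ⟨ht.1.le, ht.2⟩]

theorem integral_le_integral_completion [WellFoundedLT ι] {i : ι} {T : ℝ} (hT : 0 ≤ T) :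
    ∫ t in (0 : ℝ)..T, R i t ≤ ∫ t in (0 : ℝ)..tj i, R i t := by
  rcases le_total T (tj i) with hle | hle
  · exact intervalIntegral.integral_mono_interval le_rfl hT hle
      (Filter.Eventually.of_forall (nonneg hr hR i)) (intervalIntegrable hr hR i 0 (tj i))
  · have hafter : ∫ t in tj i..T, R i t = 0 := by
      rw [intervalIntegral.integral_congr (g := fun _ => (0 : ℝ)) fun t ht => ?_,
        intervalIntegral.integral_zero]
      rw [uIcc_of_le hle] at ht
      rw [hR i t, if_neg fun h => h.2.not_ge ht.1]
    rw [← intervalIntegral.integral_add_adjacent_intervals (intervalIntegrable hr hR i 0 (tj i))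
      (intervalIntegrable hr hR i (tj i) T), hafter, add_zero]

theorem completion_time_le [WellFoundedLT ι] {v : ι → ℝ} (htj : ∀ i, 0 ≤ tj i)
    (hvol : ∀ i, ∫ t in (0 : ℝ)..tj i, min (r i) (1 - load R i t) = v i) (j : ι) :
    tj j ≤ ∑ i ∈ Finset.Iic j, v i + v j / r j := by
  set f := fun t => min (r j) (1 - load R j t)
  have hf := min_sub_load_intervalIntegrable hr hR j 0 (tj j)
  have hload := load_intervalIntegrable hr hR j 0 (tj j)
  have hload_le : ∫ t in (0 : ℝ)..tj j, load R j t ≤ ∑ i ∈ Finset.Iio j, v i := by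
    unfold load
    rw [intervalIntegral.integral_finsetSum fun i _ => intervalIntegrable hr hR i 0 _]
    refine Finset.sum_le_sum fun i _ => ?_
    rw [← hvol i, ← integral_eq_integral_min hR (htj i)]
    exact integral_le_integral_completion hr hR (htj j)
  calc tj j = ∫ _ in (0 : ℝ)..tj j, (1 : ℝ) := by simp
    _ ≤ ∫ t in (0 : ℝ)..tj j, f t / r j + (load R j t + f t) :=
        intervalIntegral.integral_mono_on (htj j) intervalIntegrable_const
          ((hf.div_const _).add (hload.add hf)) fun t _ =>
          one_le_min_div_add_add_min (hr j) (load_nonneg hr hR j t) (load_le_one hR j t)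
    _ = v j / r j + ((∫ t in (0 : ℝ)..tj j, load R j t) + v j) := by
        rw [intervalIntegral.integral_add (hf.div_const _) (hload.add hf),
          intervalIntegral.integral_add hload hf, intervalIntegral.integral_div, hvol j]
    _ ≤ v j / r j + (∑ i ∈ Finset.Iio j, v i + v j) := by linarith
    _ = ∑ i ∈ Finset.Iic j, v i + v j / r j := by
        rw [← Finset.Iio_insert, Finset.sum_insert Finset.notMem_Iio_self]
        ring

end IsSchedule

end Greedy

theorem stmt13_general (n : ℕ) (v r : Fin n → ℝ)
    (hr : ∀ j, 0 < r j ∧ r j ≤ 1)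
    (R : Fin n → ℝ → ℝ) (tj : Fin n → ℝ) (htj : ∀ j, 0 < tj j)
    (hR : ∀ j t, R j t =
      if 0 ≤ t ∧ t < tj j then min (r j) (1 - ∑ i ∈ Finset.Iio j, R i t) else 0)
    (hvol : ∀ j,
      (∫ t in (0:ℝ)..(tj j), min (r j) (1 - ∑ i ∈ Finset.Iio j, R i t)) = v j) :
    ∑ j, tj j ≤ (∑ j, ∑ i ∈ Finset.Iic j, v i) + ∑ j, v j / r j := by
  calc ∑ j, tj j ≤ ∑ j, (∑ i ∈ Finset.Iic j, v i + v j / r j) :=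
        Finset.sum_le_sum fun j _ =>
          Greedy.IsSchedule.completion_time_le (fun j => (hr j).1) hR (fun j => (htj j).le) hvol j
    _ = (∑ j, ∑ i ∈ Finset.Iic j, v i) + ∑ j, v j / r j := Finset.sum_add_distrib

/-- The Greedy schedule's total completion time is at most `C^A + C^L`: if, with volumes
sorted ascending, `R` is the Greedy schedule with completion times `t_j` (each job gets
as much resource as possible as early as possible, and `t_j` is chosen so that job `j`
schedules exactly its volume), then
`∑_j t_j ≤ ∑_j ∑_{i ≤ j} v_i + ∑_j v_j / r_j`. -/
theorem stmt13 (n : ℕ) (v r : Fin n → ℝ)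
    (hv : ∀ j, 0 < v j) (hr : ∀ j, 0 < r j ∧ r j ≤ 1)
    (hsorted : Monotone v)
    (R : Fin n → ℝ → ℝ) (tj : Fin n → ℝ) (htj : ∀ j, 0 < tj j)
    (hR : ∀ j t, R j t =
      if 0 ≤ t ∧ t < tj j then min (r j) (1 - ∑ i ∈ Finset.Iio j, R i t) else 0)
    (hvol : ∀ j,
      (∫ t in (0:ℝ)..(tj j), min (r j) (1 - ∑ i ∈ Finset.Iio j, R i t)) = v j) :
    ∑ j, tj j ≤ (∑ j, ∑ i ∈ Finset.Iic j, v i) + ∑ j, v j / r j :=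
  stmt13_general n v r hr R tj htj hR hvol
end
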